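/- arXiv:2511.15157 — 9 statements merged into one kernel-verified Lean document; each statement's English description precedes it below -/
import Mathlib

section
/- There is an absolute constant C > 0 such that for every v = (v₁,v₂) ∈ ℝ × ℤ, the set E(v) = {u = (u₁,u₂) ∈ ℝ² : |H(u+v) − H(u−v)| ≤ 2, H(u+v, u−v)² > 100 |H(u+v) H(u−v)|, u₁+v₁ ≥ u₂+v₂ ≥ 0, and u₁−v₁ ≥ u₂−v₂ ≥ 0} satisfies |E(v)|_{ℝ×ℤ} ≤ C. -/
open MeasureTheory
open scoped ENNReal

/-- `H(ξ) = ξ₁² − ξ₂²`. -/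
noncomputable def H (ξ : ℝ × ℝ) : ℝ := ξ.1 ^ 2 - ξ.2 ^ 2

/-- `H(ξ,η) = ξ₁η₁ − ξ₂η₂`. -/
noncomputable def Hbil (ξ η : ℝ × ℝ) : ℝ := ξ.1 * η.1 - ξ.2 * η.2

/-- The `ℝ×ℤ` measure of a set `E ⊆ ℝ²`:
`|E|_{ℝ×ℤ} = ∑_{n∈ℤ}` (Lebesgue measure of `{x ∈ ℝ : (x,n) ∈ E}`). -/
noncomputable def measureRZ (E : Set (ℝ × ℝ)) : ℝ≥0∞ :=
  ∑' n : ℤ, volume {x : ℝ | (x, (n : ℝ)) ∈ E}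

def Sf (v₁ k nn : ℝ) : Set ℝ :=
  {x : ℝ | nn + k ≥ 0 ∧ nn - k ≥ 0 ∧ x + v₁ ≥ nn + k ∧ x - v₁ ≥ nn - k ∧
    |x * v₁ - nn * k| ≤ 1 / 2 ∧
    99 * (((x + v₁) ^ 2 - (nn + k) ^ 2) * ((x - v₁) ^ 2 - (nn - k) ^ 2)) <
      4 * (nn * v₁ - x * k) ^ 2}

lemma vol_le_Icc {S : Set ℝ} {a b : ℝ} (h : S ⊆ Set.Icc a b) :
    volume S ≤ ENNReal.ofReal (b - a) :=
  le_trans (measure_mono h) (le_of_eq Real.volume_Icc)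

lemma card_smul_ofReal (n : ℕ) (x : ℝ) (hx : 0 ≤ x) :
    (n : ℕ) • ENNReal.ofReal x = ENNReal.ofReal (n * x) := by
  rw [nsmul_eq_mul, ← ENNReal.ofReal_natCast n, ← ENNReal.ofReal_mul (by positivity)]

lemma Sf_zero (K N : ℤ) : Sf 0 (K : ℝ) (N : ℝ) = ∅ := by
  rw [Set.eq_empty_iff_forall_notMem]
  rintro x ⟨a1, a2, a3, a4, a5, a6⟩
  have hNK : N * K = 0 := by
    by_contra h
    have h1 : (1 : ℤ) ≤ |N * K| := Int.one_le_abs h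
    have h2 : |x * 0 - (N : ℝ) * K| = |((N * K : ℤ) : ℝ)| := by
      push_cast; rw [show x * 0 - (N:ℝ) * K = -((N:ℝ)*(K:ℝ)) by ring, abs_neg]
    rw [h2, ← Int.cast_abs] at a5
    have h3 : ((|N*K| : ℤ) : ℝ) < 1 := lt_of_le_of_lt a5 (by norm_num)
    have h4 : |N*K| < 1 := by exact_mod_cast h3
    omega
  have hK0 : (K : ℝ) = 0 := by
    rcases mul_eq_zero.1 hNK with h | h
    · subst h
      simp only [Int.cast_zero] at a1 a2
      linarith
    · exact_mod_cast congrArg (Int.cast : ℤ → ℝ) h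
  rw [hK0] at a6
  nlinarith [sq_nonneg ((x + 0)^2 - ((N:ℝ) + 0)^2), sq_nonneg (x^2 - (N:ℝ)^2)]


lemma Sf_empty_negK (v₁ : ℝ) (hv : 0 < v₁) (K n : ℤ) (hK : K ≤ -1) :
    Sf v₁ (K : ℝ) (n : ℝ) = ∅ := by
  rw [Set.eq_empty_iff_forall_notMem]
  rintro x ⟨a1, a2, a3, a4, a5, a6⟩
  have hKr : (K:ℝ) ≤ -1 := by exact_mod_cast hK
  have hn1 : (1:ℝ) ≤ n := by linarith
  have hx : (n:ℝ) ≤ x := by linarith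
  have h5 := (abs_le.1 a5).2
  nlinarith [mul_nonneg (by linarith : (0:ℝ) ≤ (n:ℝ) - 1) (by linarith : (0:ℝ) ≤ -(K:ℝ) - 1),
    mul_le_mul_of_nonneg_right hx hv.le, mul_pos (show (0:ℝ) < n by linarith) hv]


lemma Sf_empty_bigv (v₁ : ℝ) (K n : ℤ) (hK : 1 ≤ K) (hbig : 2*(K:ℝ) ≤ v₁) :
    Sf v₁ (K : ℝ) (n : ℝ) = ∅ := by
  rw [Set.eq_empty_iff_forall_notMem]
  rintro x ⟨a1, a2, a3, a4, a5, a6⟩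
  have hK1 : (1:ℝ) ≤ K := by exact_mod_cast hK
  have hv : 0 < v₁ := by linarith
  have hnK : (K:ℝ) ≤ n := by linarith
  have h5 := (abs_le.1 a5).2
  -- x ≥ n - K + v₁, so x*v₁ ≥ (n-K+v₁)*v₁; and x*v₁ ≤ n*K + 1/2
  have hx : (n:ℝ) - K + v₁ ≤ x := by linarith
  have hxv : ((n:ℝ) - K + v₁) * v₁ ≤ (n:ℝ)*K + 1/2 := by
    nlinarith [mul_le_mul_of_nonneg_right hx hv.le]
  -- but (n-K+v₁)*v₁ - n*K = n*(v₁-K) + v₁*(v₁-K) + (extra) ≥ K*K + 2K*K ≥ 3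
  nlinarith [mul_le_mul_of_nonneg_left (show (K:ℝ) ≤ v₁ - K by linarith)
      (show (0:ℝ) ≤ n by linarith),
    mul_le_mul (show 2*(K:ℝ) ≤ v₁ from hbig) (show (K:ℝ) ≤ v₁ - K by linarith)
      (by linarith) (by linarith),
    mul_le_mul_of_nonneg_left hnK (show (0:ℝ) ≤ K by linarith)]

lemma slice_le_inv (v₁ : ℝ) (hv : 0 < v₁) (k nn : ℝ) :
    volume (Sf v₁ k nn) ≤ ENNReal.ofReal (1/v₁) := by
  have hsub : Sf v₁ k nn ⊆ Set.Icc ((nn*k - 1/2)/v₁) ((nn*k + 1/2)/v₁) := by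
    rintro x ⟨a1, a2, a3, a4, a5, a6⟩
    obtain ⟨h1, h2⟩ := abs_le.1 a5
    constructor
    · rw [div_le_iff₀ hv]; linarith
    · rw [le_div_iff₀ hv]; linarith
  have harg : (nn*k + 1/2)/v₁ - (nn*k - 1/2)/v₁ = 1/v₁ := by
    rw [div_sub_div_same]; norm_num
  exact le_trans (vol_le_Icc hsub) (le_of_eq (by rw [harg]))


set_option maxHeartbeats 1000000 in
lemma smallv_mem (v₁ : ℝ) (hv : 0 < v₁) (K : ℤ) (hK : 1 ≤ K) (h2v : 2*v₁ ≤ (K:ℝ))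
    (n : ℤ) (x : ℝ) (hx : x ∈ Sf v₁ (K:ℝ) (n:ℝ)) :
    n = 1 ∧ 2 - v₁ ≤ x ∧ x ≤ 2 - v₁ + 1/20 := by
  obtain ⟨a1, a2, a3, a4, a5, a6⟩ := hx
  have hK1 : (1:ℝ) ≤ K := by exact_mod_cast hK
  set d : ℝ := (K:ℝ) - v₁ with hd
  have hd0 : 0 < d := by simp only [hd]; linarith
  have hnK : (K:ℝ) ≤ n := by linarith
  have hn0 : (0:ℝ) < n := by linarith
  set y : ℝ := x - n - d with hy
  have hy0 : 0 ≤ y := by simp only [hy, hd]; linarith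
  -- step A : y ≤ 4d/95
  have hyd : y ≤ 4*d/95 := by
    by_contra hcon
    push_neg at hcon
    have hycon : 0 < y := lt_of_le_of_lt (by positivity) hcon
    have hP : (x+v₁)^2 - ((n:ℝ)+K)^2 = (2*(n:ℝ) + 2*K + y)*y := by
      simp only [hy, hd]; ring
    have hQ : (x-v₁)^2 - ((n:ℝ)-K)^2 = (2*(n:ℝ) - 2*v₁ + y)*(y + 2*d) := by
      simp only [hy, hd]; ring
    have ht : ((n:ℝ)*v₁ - x*K)^2 = ((n:ℝ)*d + d*K + y*K)^2 := by
      simp only [hy, hd]; ring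
    have b1 : 2*(n:ℝ) + 2*K + y ≥ 2*n := by linarith
    have b2 : 2*(n:ℝ) - 2*v₁ + y ≥ n := by linarith
    have b3 : (n:ℝ)*d + d*K + y*K ≤ (n:ℝ)*(2*d + y) := by
      nlinarith [mul_le_mul_of_nonneg_left hnK hd0.le, mul_le_mul_of_nonneg_left hnK hy0]
    have b3' : 0 ≤ (n:ℝ)*d + d*K + y*K := by positivity
    have c2 : ((n:ℝ)*v₁ - x*K)^2 ≤ ((n:ℝ)*(2*d+y))^2 := by
      rw [ht]
      exact pow_le_pow_left₀ b3' b3 2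
    have f1 : (2*(n:ℝ) + 2*K + y)*(2*(n:ℝ) - 2*v₁ + y) ≥ 2*(n:ℝ)*(n:ℝ) := by
      nlinarith [b1, b2]
    have hA : 0 ≤ y*(y + 2*d) := by positivity
    -- 99 * P * Q ≥ 99 * 2n² * y(y+2d)
    have c1 : 99 * (((x + v₁) ^ 2 - ((n:ℝ) + K) ^ 2) * ((x - v₁) ^ 2 - ((n:ℝ) - K) ^ 2))
        ≥ 99 * (2*(n:ℝ)*(n:ℝ)) * (y*(y+2*d)) := by
      rw [hP, hQ]
      have : (2*(n:ℝ) + 2*K + y)*y * ((2*(n:ℝ) - 2*v₁ + y)*(y + 2*d))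
          = ((2*(n:ℝ) + 2*K + y)*(2*(n:ℝ) - 2*v₁ + y)) * (y*(y+2*d)) := by ring
      rw [this]
      linarith [mul_le_mul_of_nonneg_right f1 hA]
    have hchain : 198*((n:ℝ)*(n:ℝ))*(y*(y+2*d)) < 4*((n:ℝ)*(2*d+y))^2 := by
      have e4 : 4*((n:ℝ)*v₁ - x*K)^2 ≤ 4*((n:ℝ)*(2*d+y))^2 := by linarith
      linarith [c1, a6, e4]
    have key : 198*(y*(2*d+y)) < 4*(2*d+y)^2 := by
      have hn2 : (0:ℝ) < (n:ℝ)*(n:ℝ) := by positivity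
      nlinarith [hchain, hn2]
    nlinarith [key, mul_lt_mul_of_pos_left hcon (show (0:ℝ) < 380*d by positivity),
      sq_nonneg y]
  -- step B : n*d ≤ 1/2 + (d+y)*v₁
  have hs : (n:ℝ)*d ≤ 1/2 + (d + y)*v₁ := by
    have h5 := (abs_le.1 a5).1
    simp only [hy, hd]
    nlinarith [h5]
  -- step C : K = 1
  have hK2 : K = 1 := by
    have hdK : (K:ℝ)/2 ≤ d := by simp only [hd]; linarith
    have hKd : (K:ℝ)*d ≤ 1/2 + (99/190)*((K:ℝ)*d) := by
      nlinarith [mul_le_mul_of_nonneg_right hnK hd0.le,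
        mul_le_mul (le_refl ((d + 4*d/95))) h2v (by positivity) (by linarith)]
    have hKlt : (K:ℝ) < 2 := by nlinarith [mul_le_mul_of_nonneg_left hdK (show (0:ℝ) ≤ K by linarith)]
    have : K < 2 := by exact_mod_cast hKlt
    omega
  have hKr : (K:ℝ) = 1 := by rw [hK2]; norm_num
  -- step D : n = 1
  have hdhalf : 1/2 ≤ d := by rw [hd, hKr]; linarith
  have hd1' : d ≤ 1 := by rw [hd, hKr]; linarith
  have hn2 : (n:ℝ) < 2 := by nlinarith [hs, hyd, hdhalf, hd0]
  have hn1 : n = 1 := by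
    have h1 : (1:ℝ) ≤ n := by rw [← hKr]; exact hnK
    have h1' : (1:ℤ) ≤ n := by exact_mod_cast h1
    have h2' : n < 2 := by exact_mod_cast hn2
    omega
  have hnr : (n:ℝ) = 1 := by rw [hn1]; norm_num
  refine ⟨hn1, ?_, ?_⟩
  · have : y = x - (n:ℝ) - d := hy
    rw [hnr] at this
    rw [hd, hKr] at this
    linarith [hy0]
  · have h41 : 4*d/95 ≤ 4/95 := by linarith
    have : y = x - (n:ℝ) - d := hy
    rw [hnr, hd, hKr] at this
    linarith [hyd, h41]

set_option maxHeartbeats 1000000 in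
lemma main_window (v₁ : ℝ) (K : ℤ) (hK : 1 ≤ K) (hlow : (K:ℝ) < 2*v₁) (hhigh : v₁ < 2*(K:ℝ))
    (n : ℤ) (hn : 2*K + 1 ≤ n) (x : ℝ) (hx : x ∈ Sf v₁ (K:ℝ) (n:ℝ)) :
    (n:ℝ) + |v₁ - (K:ℝ)| ≤ x ∧ x ≤ (n:ℝ) + |v₁ - (K:ℝ)| + |v₁ - (K:ℝ)|/40 := by
  obtain ⟨a1, a2, a3, a4, a5, a6⟩ := hx
  have hK1 : (1:ℝ) ≤ K := by exact_mod_cast hK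
  have hv : 0 < v₁ := by linarith
  obtain ⟨d, hd⟩ : ∃ d : ℝ, d = |v₁ - (K:ℝ)| := ⟨_, rfl⟩
  rw [← hd]
  have hd0 : 0 ≤ d := hd ▸ abs_nonneg _
  have hd2 : d^2 = (v₁ - (K:ℝ))^2 := by rw [hd]; exact sq_abs _
  have hdle : v₁ - (K:ℝ) ≤ d := hd ▸ le_abs_self _
  have hdle' : -(v₁ - (K:ℝ)) ≤ d := hd ▸ neg_le_abs _
  have hnr : 2*(K:ℝ) + 1 ≤ (n:ℝ) := by exact_mod_cast hn
  have hxl : (n:ℝ) + d ≤ x := by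
    rcases abs_cases (v₁ - (K:ℝ)) with ⟨he, _⟩ | ⟨he, _⟩
    · rw [hd, he]; linarith
    · rw [hd, he]; linarith
  refine ⟨hxl, ?_⟩
  by_contra hcon
  push_neg at hcon
  obtain ⟨y, hy⟩ : ∃ y : ℝ, y = x - n - d := ⟨_, rfl⟩
  have hy0 : 0 ≤ y := by rw [hy]; linarith
  have hycon : d/40 < y := by rw [hy]; linarith
  have hypos : 0 < y := lt_of_le_of_lt (by positivity) hycon
  have hxeq : x = (n:ℝ) + d + y := by rw [hy]; ring
  have hsmall : (x - (n:ℝ))^2 - (v₁ - (K:ℝ))^2 = y*(y + 2*d) := by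
    rw [hxeq]; linear_combination hd2
  have hPQ : ((x + v₁) ^ 2 - ((n:ℝ) + K) ^ 2) * ((x - v₁) ^ 2 - ((n:ℝ) - K) ^ 2)
      = ((x + v₁ + n + K)*(x - v₁ + n - K)) * ((x - (n:ℝ))^2 - (v₁ - (K:ℝ))^2) := by
    ring
  have bX1 : x + v₁ + (n:ℝ) + K ≥ 2*(n:ℝ) := by linarith
  have bX2 : x - v₁ + (n:ℝ) - K ≥ (n:ℝ) := by linarith
  have hnpos : (0:ℝ) < n := by linarith
  have ht : (n:ℝ)*v₁ - x*K = (n:ℝ)*(v₁ - K) - (d + y)*K := by rw [hxeq]; ring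
  have htu : (n:ℝ)*v₁ - x*K ≤ (n:ℝ)*d + (d+y)*(K:ℝ) := by
    rw [ht]
    nlinarith [mul_le_mul_of_nonneg_left hdle (le_of_lt hnpos)]
  have htl : -((n:ℝ)*d + (d+y)*(K:ℝ)) ≤ (n:ℝ)*v₁ - x*K := by
    rw [ht]
    nlinarith [mul_le_mul_of_nonneg_left hdle' (le_of_lt hnpos)]
  have hKn2 : (K:ℝ) ≤ (n:ℝ)/2 := by linarith
  have htb : (n:ℝ)*d + (d+y)*(K:ℝ) ≤ (n:ℝ)*(3*d + y)/2 := by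
    nlinarith [mul_le_mul_of_nonneg_left hKn2 (show (0:ℝ) ≤ d + y by linarith)]
  have htb0 : 0 ≤ (n:ℝ)*d + (d+y)*(K:ℝ) := by positivity
  have c2 : ((n:ℝ)*v₁ - x*K)^2 ≤ ((n:ℝ)*(3*d+y)/2)^2 := by
    have h1 : ((n:ℝ)*v₁ - x*K)^2 ≤ ((n:ℝ)*d + (d+y)*(K:ℝ))^2 :=
      sq_le_sq' htl htu
    have h2 : ((n:ℝ)*d + (d+y)*(K:ℝ))^2 ≤ ((n:ℝ)*(3*d+y)/2)^2 :=
      pow_le_pow_left₀ htb0 htb 2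
    exact le_trans h1 h2
  have hA : 0 ≤ y*(y + 2*d) := by positivity
  have f1 : (x + v₁ + (n:ℝ) + K)*(x - v₁ + (n:ℝ) - K) ≥ 2*(n:ℝ)*(n:ℝ) :=
    mul_le_mul bX1 bX2 hnpos.le (by linarith)
  have c1 : 99 * (((x + v₁) ^ 2 - ((n:ℝ) + K) ^ 2) * ((x - v₁) ^ 2 - ((n:ℝ) - K) ^ 2))
      ≥ 99 * (2*(n:ℝ)*(n:ℝ)) * (y*(y+2*d)) := by
    rw [hPQ, hsmall]
    linarith [mul_le_mul_of_nonneg_right f1 hA]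
  have hchain : 198*((n:ℝ)*(n:ℝ))*(y*(y+2*d)) < 4*((n:ℝ)*(3*d+y)/2)^2 := by
    linarith [c1, a6, c2]
  have key : 198*(y*(y+2*d)) < (3*d+y)^2 := by
    have hn2 : (0:ℝ) < (n:ℝ)*(n:ℝ) := by positivity
    nlinarith [hchain, hn2]
  nlinarith [key, mul_le_mul_of_nonneg_left (le_of_lt hycon) (show (0:ℝ) ≤ 390*d by positivity),
    mul_pos hypos hypos]

lemma main_count (v₁ : ℝ) (K : ℤ) (hK : 1 ≤ K) (hlow : (K:ℝ) < 2*v₁) (hhigh : v₁ < 2*(K:ℝ))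
    (n : ℤ) (hn : 2*K + 1 ≤ n) (x : ℝ) (hx : x ∈ Sf v₁ (K:ℝ) (n:ℝ)) :
    (n:ℝ) * |v₁ - (K:ℝ)| ≤ 1/2 + (41/40) * |v₁ - (K:ℝ)| * v₁ := by
  obtain ⟨hw1, hw2⟩ := main_window v₁ K hK hlow hhigh n hn x hx
  obtain ⟨a1, a2, a3, a4, a5, a6⟩ := hx
  have hK1 : (1:ℝ) ≤ K := by exact_mod_cast hK
  have hv : 0 < v₁ := by linarith
  have hnr : 2*(K:ℝ) + 1 ≤ (n:ℝ) := by exact_mod_cast hn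
  obtain ⟨h5l, h5u⟩ := abs_le.1 a5
  have hseq : x*v₁ - (n:ℝ)*K = (n:ℝ)*(v₁ - K) + (x - n)*v₁ := by ring
  rcases abs_cases (v₁ - (K:ℝ)) with ⟨he, hsgn⟩ | ⟨he, hsgn⟩
  · -- v₁ ≥ K : n*d ≤ s ≤ 1/2
    rw [he]
    have hxn : (0:ℝ) ≤ x - n := by rw [he] at hw1; linarith
    nlinarith [mul_nonneg hxn hv.le, mul_nonneg (mul_nonneg (show (0:ℝ) ≤ 41/40 by norm_num)
      (show (0:ℝ) ≤ v₁ - K by linarith)) hv.le]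
  · -- v₁ < K : d = -(v₁ - K); -s = n*d - (x-n)*v₁ and x - n ≤ d + d/40
    rw [he]
    have hxn2 : x - n ≤ -(v₁ - (K:ℝ)) + -(v₁ - (K:ℝ))/40 := by rw [he] at hw2; linarith
    have hxn : (0:ℝ) ≤ x - n := by rw [he] at hw1; linarith
    nlinarith [mul_le_mul_of_nonneg_right hxn2 hv.le]


lemma case_main (v₁ : ℝ) (K : ℤ) (hK : 1 ≤ K) (hlow : (K:ℝ) < 2*v₁) (hhigh : v₁ < 2*(K:ℝ)) :
    ∑' n : ℤ, volume (Sf v₁ (K:ℝ) (n:ℝ)) ≤ ENNReal.ofReal 100 := by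
  have hK1 : (1:ℝ) ≤ K := by exact_mod_cast hK
  have hv : 0 < v₁ := by linarith
  set d : ℝ := |v₁ - (K:ℝ)| with hd
  have hd0 : 0 ≤ d := abs_nonneg _
  set B : ℤ := 2*K + ⌈1/(2*d)⌉ + ⌈(K:ℝ)/20⌉ + 1 with hB
  have hc1 : (0:ℤ) ≤ ⌈1/(2*d)⌉ := Int.ceil_nonneg (by positivity)
  have hc1' : (1/(2*d) : ℝ) ≤ ⌈1/(2*d)⌉ := Int.le_ceil _
  have hc2 : (0:ℤ) < ⌈(K:ℝ)/20⌉ := Int.ceil_pos.2 (by positivity)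
  have hc2' : ((K:ℝ)/20 : ℝ) ≤ ⌈(K:ℝ)/20⌉ := Int.le_ceil _
  have hBge : 2*K + 2 ≤ B := by omega
  -- outside: measure zero
  have hout : ∀ n ∉ Finset.Ioc (K-1) B, volume (Sf v₁ (K:ℝ) (n:ℝ)) = 0 := by
    intro n hn
    rw [Finset.mem_Ioc, not_and_or] at hn
    rcases hn with h | h
    · push_neg at h
      have : Sf v₁ (K:ℝ) (n:ℝ) = ∅ := by
        rw [Set.eq_empty_iff_forall_notMem]
        rintro x ⟨a1, a2, _⟩
        have : (K:ℝ) ≤ (n:ℝ) := by linarith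
        have : K ≤ n := by exact_mod_cast this
        omega
      rw [this]; exact measure_empty
    · push_neg at h
      have hn2K : 2*K + 1 ≤ n := by omega
      rcases eq_or_lt_of_le hd0 with hd0' | hdpos
      · -- d = 0 : window has zero length
        have hsub : Sf v₁ (K:ℝ) (n:ℝ) ⊆ Set.Icc ((n:ℝ) + d) ((n:ℝ) + d + d/40) := by
          intro x hx
          exact main_window v₁ K hK hlow hhigh n hn2K x hx
        have := vol_le_Icc hsub
        rw [show ((n:ℝ) + d + d/40) - ((n:ℝ) + d) = d/40 by ring, ← hd0'] at this
        simpa using this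
      · -- d > 0 : empty by count bound
        have : Sf v₁ (K:ℝ) (n:ℝ) = ∅ := by
          rw [Set.eq_empty_iff_forall_notMem]
          intro x hx
          have hcount := main_count v₁ K hK hlow hhigh n hn2K x hx
          rw [← hd] at hcount
          have hnB : (B:ℝ) + 1 ≤ (n:ℝ) := by exact_mod_cast h
          have hBr : (2*(K:ℝ) + (1/(2*d)) + ((K:ℝ)/20) + 1) ≤ (B:ℝ) := by
            rw [hB]; push_cast; linarith
          have hdd : d * (1/(2*d)) = 1/2 := by field_simp
          have hnd : ((2*(K:ℝ) + (1/(2*d)) + ((K:ℝ)/20) + 2)) * d ≤ (n:ℝ) * d := by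
            apply mul_le_mul_of_nonneg_right _ hd0
            linarith
          nlinarith [hnd, hdd, hcount, mul_pos hdpos hv]
        rw [this]; exact measure_empty
  rw [tsum_eq_sum hout]
  have hdisj : Disjoint (Finset.Ioc (K-1) (2*K)) (Finset.Ioc (2*K) B) := by
    rw [Finset.disjoint_left]
    intro a ha hb
    rw [Finset.mem_Ioc] at ha hb
    omega
  have hsplit : Finset.Ioc (K-1) B = Finset.Ioc (K-1) (2*K) ∪ Finset.Ioc (2*K) B :=
    (Finset.Ioc_union_Ioc_eq_Ioc (by omega) (by omega)).symm
  rw [hsplit, Finset.sum_union hdisj]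
  -- part 1
  have hpart1 : ∑ n ∈ Finset.Ioc (K-1) (2*K), volume (Sf v₁ (K:ℝ) (n:ℝ))
      ≤ ENNReal.ofReal 4 := by
    refine le_trans (Finset.sum_le_card_nsmul _ _ (ENNReal.ofReal (1/v₁))
      (fun n _ => slice_le_inv v₁ hv _ _)) ?_
    rw [Int.card_Ioc, card_smul_ofReal _ _ (by positivity)]
    apply ENNReal.ofReal_le_ofReal
    have hcardeq : ((2*K - (K-1)).toNat : ℝ) = (K:ℝ) + 1 := by
      have h1 : (2*K - (K-1)) = K + 1 := by ring
      have h2 : ((K+1).toNat : ℤ) = K + 1 := Int.toNat_of_nonneg (by omega)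
      rw [h1]
      exact_mod_cast h2
    rw [hcardeq, mul_one_div, div_le_iff₀ hv]
    linarith
  -- part 2
  have hpart2 : ∑ n ∈ Finset.Ioc (2*K) B, volume (Sf v₁ (K:ℝ) (n:ℝ))
      ≤ ENNReal.ofReal 7 := by
    set L : ℝ := min (1/v₁) (d/40) with hL
    have hL0 : 0 ≤ L := le_min (by positivity) (by positivity)
    refine le_trans (Finset.sum_le_card_nsmul _ _ (ENNReal.ofReal L) ?_) ?_
    · intro n hnmem
      rw [Finset.mem_Ioc] at hnmem
      have hn2K : 2*K + 1 ≤ n := by omega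
      rcases le_total (1/v₁) (d/40) with hc | hc
      · rw [hL, min_eq_left hc]
        exact slice_le_inv v₁ hv _ _
      · rw [hL, min_eq_right hc]
        have hsub : Sf v₁ (K:ℝ) (n:ℝ) ⊆ Set.Icc ((n:ℝ) + d) ((n:ℝ) + d + d/40) := by
          intro x hx
          exact main_window v₁ K hK hlow hhigh n hn2K x hx
        refine le_trans (vol_le_Icc hsub) (le_of_eq ?_)
        rw [show ((n:ℝ) + d + d/40) - ((n:ℝ) + d) = d/40 by ring]
    · rw [Int.card_Ioc, card_smul_ofReal _ _ hL0]
      apply ENNReal.ofReal_le_ofReal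
      have hcard : ((B - 2*K).toNat : ℝ) ≤ 1/(2*d) + (K:ℝ)/20 + 3 := by
        have h1 : ((B - 2*K).toNat : ℝ) = ((B:ℝ) - 2*K) := by
          have h2 : ((B - 2*K).toNat : ℤ) = B - 2*K := Int.toNat_of_nonneg (by omega)
          exact_mod_cast h2
        rw [h1, hB]
        push_cast
        have g1 : ((⌈1/(2*d)⌉ : ℤ) : ℝ) < 1/(2*d) + 1 := Int.ceil_lt_add_one _
        have g2 : ((⌈(K:ℝ)/20⌉ : ℤ) : ℝ) < (K:ℝ)/20 + 1 := Int.ceil_lt_add_one _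
        linarith
      have hLd : L ≤ d/40 := min_le_right _ _
      have hLv : L ≤ 1/v₁ := min_le_left _ _
      have hinvK : 1/v₁ ≤ 2/(K:ℝ) := by
        rw [div_le_div_iff₀ hv (by linarith)]
        linarith
      rcases eq_or_lt_of_le hd0 with hd0' | hdpos
      · have hL00 : L = 0 := le_antisymm (by rw [← hd0'] at hLd; simpa using hLd) hL0
        rw [hL00, mul_zero]
        norm_num
      · have e1 : (1/(2*d)) * L ≤ 1/80 := by
          have := mul_le_mul_of_nonneg_left hLd (show (0:ℝ) ≤ 1/(2*d) by positivity)
          have heq : (1/(2*d)) * (d/40) = 1/80 := by field_simp; ring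
          linarith
        have e2 : ((K:ℝ)/20) * L ≤ 1/10 := by
          have h1 := mul_le_mul_of_nonneg_left hLv (show (0:ℝ) ≤ (K:ℝ)/20 by positivity)
          have h2 : ((K:ℝ)/20) * (1/v₁) ≤ 1/10 := by
            rw [div_mul_eq_mul_div, mul_one_div, div_div, div_le_div_iff₀ (by positivity) (by norm_num)]
            linarith
          linarith
        have e3 : 3 * L ≤ 6 := by
          have h1 : L ≤ 2/(K:ℝ) := le_trans hLv hinvK
          have h2 : 2/(K:ℝ) ≤ 2 := by
            rw [div_le_iff₀ (by linarith)]
            linarith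
          linarith
        nlinarith [mul_le_mul_of_nonneg_right hcard hL0, e1, e2, e3]
  calc ∑ n ∈ Finset.Ioc (K-1) (2*K), volume (Sf v₁ (K:ℝ) (n:ℝ))
        + ∑ n ∈ Finset.Ioc (2*K) B, volume (Sf v₁ (K:ℝ) (n:ℝ))
      ≤ ENNReal.ofReal 4 + ENNReal.ofReal 7 := add_le_add hpart1 hpart2
    _ ≤ ENNReal.ofReal 100 := by
        rw [← ENNReal.ofReal_add (by norm_num) (by norm_num)]
        apply ENNReal.ofReal_le_ofReal
        norm_num

lemma case_K0 (v₁ : ℝ) (hv : 0 < v₁) :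
    ∑' n : ℤ, volume (Sf v₁ ((0:ℤ) : ℝ) (n : ℝ)) ≤ ENNReal.ofReal 100 := by
  set B : ℤ := ⌊1 / (2 * v₁)⌋ with hB
  have hmem : ∀ (n : ℤ) (x : ℝ), x ∈ Sf v₁ ((0:ℤ):ℝ) (n:ℝ) →
      1 ≤ n ∧ (n : ℝ) * v₁ ≤ 1/2 ∧ (n:ℝ) + v₁ ≤ x ∧ x ≤ (n:ℝ) + v₁ + v₁/198 := by
    rintro n x ⟨a1, a2, a3, a4, a5, a6⟩
    simp only [Int.cast_zero] at a1 a2 a3 a4 a5 a6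
    have hn0 : (0:ℝ) ≤ n := by linarith
    have hxn : (n:ℝ) + v₁ ≤ x := by linarith
    have hxv : x * v₁ ≤ 1/2 := by have := (abs_le.1 a5).2; linarith
    have hn1 : 1 ≤ n := by
      by_contra h
      push_neg at h
      have hn0' : (0:ℤ) ≤ n := by exact_mod_cast hn0
      have : n = 0 := by omega
      subst this
      simp only [Int.cast_zero] at a6
      nlinarith [sq_nonneg ((x+v₁)*(x-v₁))]
    have hn1r : (1:ℝ) ≤ n := by exact_mod_cast hn1
    have hnv : (n:ℝ) * v₁ ≤ 1/2 := by nlinarith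
    refine ⟨hn1, hnv, hxn, ?_⟩
    by_contra h
    push_neg at h
    have hy : x - (n:ℝ) - v₁ > v₁ / 198 := by linarith
    have e1 : (x + v₁)^2 - (n:ℝ)^2 ≥ 4 * v₁ * n := by nlinarith
    have e2 : (x - v₁)^2 - (n:ℝ)^2 > 2 * (n:ℝ) * (v₁/198) := by nlinarith
    nlinarith [e1, e2, mul_pos hv (lt_of_lt_of_le zero_lt_one hn1r),
      mul_lt_mul_of_pos_left e2 (show (0:ℝ) < 4 * v₁ * n by positivity)]
  have hout : ∀ n ∉ Finset.Icc 1 B, volume (Sf v₁ ((0:ℤ):ℝ) (n:ℝ)) = 0 := by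
    intro n hn
    rw [Finset.mem_Icc, not_and_or] at hn
    have : Sf v₁ ((0:ℤ):ℝ) (n:ℝ) = ∅ := by
      rw [Set.eq_empty_iff_forall_notMem]
      intro x hx
      obtain ⟨h1, h2, _, _⟩ := hmem n x hx
      rcases hn with h | h
      · omega
      · push_neg at h
        have h3 : (1 / (2*v₁) : ℝ) < n := Int.floor_lt.1 h
        have h4 := (div_lt_iff₀ (by positivity : (0:ℝ) < 2*v₁)).1 h3
        nlinarith
    rw [this]; simp
  calc ∑' n : ℤ, volume (Sf v₁ ((0:ℤ):ℝ) (n:ℝ))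
      = ∑ n ∈ Finset.Icc 1 B, volume (Sf v₁ ((0:ℤ):ℝ) (n:ℝ)) := tsum_eq_sum hout
    _ ≤ (Finset.Icc 1 B).card • ENNReal.ofReal (v₁/198) := by
        apply Finset.sum_le_card_nsmul
        intro n _
        have hsub : Sf v₁ ((0:ℤ):ℝ) (n:ℝ) ⊆ Set.Icc ((n:ℝ) + v₁) ((n:ℝ) + v₁ + v₁/198) := by
          intro x hx
          obtain ⟨_, _, h3, h4⟩ := hmem n x hx
          exact ⟨by linarith, by linarith⟩
        refine le_trans (vol_le_Icc hsub) (ENNReal.ofReal_le_ofReal (by linarith))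
    _ ≤ ENNReal.ofReal 100 := by
        have hcard : (Finset.Icc 1 B).card = (B + 1 - 1).toNat := Int.card_Icc 1 B
        rw [hcard, show B + 1 - 1 = B by ring, card_smul_ofReal _ _ (by positivity)]
        apply ENNReal.ofReal_le_ofReal
        rcases le_or_gt B 0 with h | h
        · have : B.toNat = 0 := by omega
          rw [this]; norm_num
        · have h1 : (B.toNat : ℝ) = (B:ℝ) := by exact_mod_cast Int.toNat_of_nonneg h.le
          rw [h1]
          have h2 : (B:ℝ) ≤ 1 / (2 * v₁) := Int.floor_le _
          have h3 := (le_div_iff₀ (by positivity : (0:ℝ) < 2*v₁)).1 h2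
          have h4 : (B:ℝ) * (v₁ / 198) = ((B:ℝ) * (2*v₁)) / 396 := by ring
          rw [h4]
          linarith

lemma case_smallv (v₁ : ℝ) (hv : 0 < v₁) (K : ℤ) (hK : 1 ≤ K) (h2v : 2*v₁ ≤ (K:ℝ)) :
    ∑' n : ℤ, volume (Sf v₁ (K:ℝ) (n:ℝ)) ≤ ENNReal.ofReal 100 := by
  have hout : ∀ n ∉ ({1} : Finset ℤ), volume (Sf v₁ (K:ℝ) (n:ℝ)) = 0 := by
    intro n hn
    simp only [Finset.mem_singleton] at hn
    have : Sf v₁ (K:ℝ) (n:ℝ) = ∅ := by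
      rw [Set.eq_empty_iff_forall_notMem]; intro x hx
      exact hn (smallv_mem v₁ hv K hK h2v n x hx).1
    rw [this]; exact measure_empty
  rw [tsum_eq_sum hout, Finset.sum_singleton]
  have hsub : Sf v₁ (K:ℝ) ((1:ℤ):ℝ) ⊆ Set.Icc (2 - v₁) (2 - v₁ + 1/20) := fun x hx =>
    ⟨(smallv_mem v₁ hv K hK h2v 1 x hx).2.1, (smallv_mem v₁ hv K hK h2v 1 x hx).2.2⟩
  refine le_trans (vol_le_Icc hsub) (ENNReal.ofReal_le_ofReal (by norm_num))

lemma main_bound (v₁ : ℝ) (hv : 0 < v₁) (K : ℤ) :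
    ∑' n : ℤ, volume (Sf v₁ (K : ℝ) (n : ℝ)) ≤ ENNReal.ofReal 100 := by
  rcases lt_trichotomy K 0 with h | h | h
  · have he : ∀ n : ℤ, Sf v₁ (K:ℝ) (n:ℝ) = ∅ := fun n => Sf_empty_negK v₁ hv K n (by omega)
    simp_rw [he]
    simp
  · subst h
    exact case_K0 v₁ hv
  · have hK : 1 ≤ K := h
    rcases le_or_gt (2*v₁) (K:ℝ) with hsm | hsm
    · exact case_smallv v₁ hv K hK hsm
    · rcases le_or_gt (2*(K:ℝ)) v₁ with hbg | hbg
      · have he : ∀ n : ℤ, Sf v₁ (K:ℝ) (n:ℝ) = ∅ := fun n => Sf_empty_bigv v₁ K n hK hbg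
        simp_rw [he]
        simp
      · exact case_main v₁ K hK hsm hbg

lemma slice_subset_Sf (v₁ : ℝ) (v₂ : ℤ) (n : ℤ) :
    {x : ℝ | (x, (n : ℝ)) ∈ {u : ℝ × ℝ | |H (u + (v₁, (v₂ : ℝ))) - H (u - (v₁, (v₂ : ℝ)))| ≤ 2 ∧
          (Hbil (u + (v₁, (v₂ : ℝ))) (u - (v₁, (v₂ : ℝ)))) ^ 2 >
            100 * |H (u + (v₁, (v₂ : ℝ))) * H (u - (v₁, (v₂ : ℝ)))| ∧
          u.1 + v₁ ≥ u.2 + (v₂ : ℝ) ∧ u.2 + (v₂ : ℝ) ≥ 0 ∧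
          u.1 - v₁ ≥ u.2 - (v₂ : ℝ) ∧ u.2 - (v₂ : ℝ) ≥ 0}} ⊆ Sf v₁ (v₂ : ℝ) (n : ℝ) := by
  intro x hx
  simp only [Set.mem_setOf_eq, Prod.mk_add_mk, Prod.mk_sub_mk, H, Hbil] at hx
  obtain ⟨h1, h2, h3, h4, h5, h6⟩ := hx
  have hP : (0:ℝ) ≤ (x + v₁) ^ 2 - ((n : ℝ) + v₂) ^ 2 := by nlinarith [h3, h4]
  have hQ : (0:ℝ) ≤ (x - v₁) ^ 2 - ((n : ℝ) - v₂) ^ 2 := by nlinarith [h5, h6]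
  refine ⟨h4, h6, h3, h5, ?_, ?_⟩
  · rw [abs_le] at h1 ⊢
    constructor <;> nlinarith [h1.1, h1.2]
  · have habs : |((x + v₁) ^ 2 - ((n:ℝ) + v₂) ^ 2) * ((x - v₁) ^ 2 - ((n:ℝ) - v₂) ^ 2)|
        = ((x + v₁) ^ 2 - ((n:ℝ) + v₂) ^ 2) * ((x - v₁) ^ 2 - ((n:ℝ) - v₂) ^ 2) :=
      abs_of_nonneg (mul_nonneg hP hQ)
    rw [habs] at h2
    nlinarith [h2]

lemma Sf_neg (v₁ k nn : ℝ) : Sf (-v₁) (-k) nn = Sf v₁ k nn := by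
  ext x
  simp only [Sf, Set.mem_setOf_eq]
  constructor <;> rintro ⟨a1, a2, a3, a4, a5, a6⟩
  · refine ⟨by linarith, by linarith, by linarith, by linarith, ?_, ?_⟩
    · have he : x * v₁ - nn * k = -(x * (-v₁) - nn * (-k)) := by ring
      rw [he, abs_neg]; exact a5
    · nlinarith [a6]
  · refine ⟨by linarith, by linarith, by linarith, by linarith, ?_, ?_⟩
    · have he : x * (-v₁) - nn * (-k) = -(x * v₁ - nn * k) := by ring
      rw [he, abs_neg]; exact a5
    · nlinarith [a6]

/-- There is an absolute constant `C > 0` such that for every `v = (v₁,v₂) ∈ ℝ × ℤ`, the set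
`E(v) = {u = (u₁,u₂) ∈ ℝ² : |H(u+v) − H(u−v)| ≤ 2, H(u+v, u−v)² > 100 |H(u+v) H(u−v)|,
u₁+v₁ ≥ u₂+v₂ ≥ 0, and u₁−v₁ ≥ u₂−v₂ ≥ 0}` satisfies `|E(v)|_{ℝ×ℤ} ≤ C`. -/
theorem stmt_4 :
    ∃ C : ℝ, 0 < C ∧ ∀ (v₁ : ℝ) (v₂ : ℤ),
      measureRZ {u : ℝ × ℝ | |H (u + (v₁, (v₂ : ℝ))) - H (u - (v₁, (v₂ : ℝ)))| ≤ 2 ∧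
          (Hbil (u + (v₁, (v₂ : ℝ))) (u - (v₁, (v₂ : ℝ)))) ^ 2 >
            100 * |H (u + (v₁, (v₂ : ℝ))) * H (u - (v₁, (v₂ : ℝ)))| ∧
          u.1 + v₁ ≥ u.2 + (v₂ : ℝ) ∧ u.2 + (v₂ : ℝ) ≥ 0 ∧
          u.1 - v₁ ≥ u.2 - (v₂ : ℝ) ∧ u.2 - (v₂ : ℝ) ≥ 0}
        ≤ ENNReal.ofReal C := by
  refine ⟨100, by norm_num, ?_⟩
  intro v₁ v₂
  have hsub : measureRZ {u : ℝ × ℝ | |H (u + (v₁, (v₂ : ℝ))) - H (u - (v₁, (v₂ : ℝ)))| ≤ 2 ∧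
          (Hbil (u + (v₁, (v₂ : ℝ))) (u - (v₁, (v₂ : ℝ)))) ^ 2 >
            100 * |H (u + (v₁, (v₂ : ℝ))) * H (u - (v₁, (v₂ : ℝ)))| ∧
          u.1 + v₁ ≥ u.2 + (v₂ : ℝ) ∧ u.2 + (v₂ : ℝ) ≥ 0 ∧
          u.1 - v₁ ≥ u.2 - (v₂ : ℝ) ∧ u.2 - (v₂ : ℝ) ≥ 0}
      ≤ ∑' n : ℤ, volume (Sf v₁ (v₂ : ℝ) (n : ℝ)) := by
    apply ENNReal.tsum_le_tsum
    intro n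
    exact measure_mono (slice_subset_Sf v₁ v₂ n)
  refine le_trans hsub ?_
  rcases lt_trichotomy v₁ 0 with hneg | hzero | hpos
  · have heq : ∀ n : ℤ, Sf v₁ (v₂ : ℝ) (n : ℝ) = Sf (-v₁) ((-v₂ : ℤ) : ℝ) (n : ℝ) := by
      intro n
      rw [show ((-v₂ : ℤ) : ℝ) = -(v₂ : ℝ) by push_cast; ring, Sf_neg]
    simp_rw [heq]
    exact main_bound (-v₁) (by linarith) (-v₂)
  · subst hzero
    have he : ∀ n : ℤ, Sf 0 (v₂ : ℝ) (n : ℝ) = ∅ := fun n => Sf_zero v₂ n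
    simp_rw [he]
    simp
  · exact main_bound v₁ hpos v₂
end

section
/- There is an absolute constant C > 0 such that for every v ∈ ℝ² with H(v) ≠ 0, the two-dimensional Lebesgue measure of the set {w ∈ ℝ² : |H(v) − H(w)| ≤ 1 and H(v,w)² ≤ 100 |H(v) H(w)|} is at most C. -/
open MeasureTheory

/-- If `(s+t)² ≤ 400|st|` then `|t| ≤ 402|s|`. -/
lemma abs_ratio {s t : ℝ} (h : (s + t) ^ 2 ≤ 400 * |s * t|) : |t| ≤ 402 * |s| := by
  have h1 : |s * t| = |s| * |t| := abs_mul s t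
  nlinarith [neg_abs_le (s * t), sq_abs s, sq_abs t, abs_nonneg s, abs_nonneg t]

/-- Measure of the preimage of an interval under multiplication by `s ≠ 0`. -/
lemma slice_mul (s a b : ℝ) (hs : s ≠ 0) :
    volume {t : ℝ | s * t ∈ Set.Icc a b} ≤ ENNReal.ofReal ((b - a) / |s|) := by
  have hset : {t : ℝ | s * t ∈ Set.Icc a b} = (fun t => s * t) ⁻¹' Set.Icc a b := rfl
  rw [hset, Real.volume_preimage_mul_left hs, Real.volume_Icc]
  rcases le_or_gt a b with hab | hab
  · rw [← ENNReal.ofReal_mul (abs_nonneg _)]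
    apply ENNReal.ofReal_le_ofReal
    rw [abs_inv, div_eq_mul_inv, mul_comm]
  · have hz : ENNReal.ofReal (b - a) = 0 := ENNReal.ofReal_eq_zero.mpr (by linarith)
    rw [hz, mul_zero]
    exact zero_le

/-- Fubini-type bound: if a measurable planar set has first coordinate bounded by `S`
and all vertical slices of measure at most `K`, its measure is at most `2SK`. -/
lemma fub (Bs : Set (ℝ × ℝ)) (hm : MeasurableSet Bs) (S K : ℝ) (hK : 0 ≤ K)
    (h1 : ∀ p ∈ Bs, |p.1| ≤ S)
    (h2 : ∀ s : ℝ, volume {t : ℝ | (s, t) ∈ Bs} ≤ ENNReal.ofReal K) :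
    volume Bs ≤ ENNReal.ofReal (2 * S * K) := by
  rw [show (volume : Measure (ℝ × ℝ)) = (volume : Measure ℝ).prod volume from rfl,
    Measure.prod_apply hm]
  have hb : ∀ s : ℝ, volume (Prod.mk s ⁻¹' Bs)
      ≤ (Set.Icc (-S) S).indicator (fun _ => ENNReal.ofReal K) s := by
    intro s
    by_cases hs : s ∈ Set.Icc (-S) S
    · rw [Set.indicator_of_mem hs]; exact h2 s
    · rw [Set.indicator_of_notMem hs]
      have he : Prod.mk s ⁻¹' Bs = ∅ := by
        rw [Set.eq_empty_iff_forall_notMem]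
        intro t ht
        exact hs (Set.mem_Icc.mpr (abs_le.mp (h1 (s, t) ht)))
      simp [he]
  calc ∫⁻ s, volume (Prod.mk s ⁻¹' Bs)
      ≤ ∫⁻ s, (Set.Icc (-S) S).indicator (fun _ => ENNReal.ofReal K) s := lintegral_mono hb
    _ = ENNReal.ofReal K * volume (Set.Icc (-S) S) := by
        rw [lintegral_indicator measurableSet_Icc, setLIntegral_const]
    _ ≤ ENNReal.ofReal (2 * S * K) := by
        rw [Real.volume_Icc, ← ENNReal.ofReal_mul hK]
        exact ENNReal.ofReal_le_ofReal (le_of_eq (by ring))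

/-- The key measure bound for the model set in light-cone coordinates. -/
lemma Bbound (l : ℝ) (hl : 0 < l) :
    volume {x : ℝ × ℝ | |l ^ 2 - x.1 * x.2| ≤ l ∧ (x.1 + x.2) ^ 2 ≤ 400 * |x.1 * x.2|}
      ≤ ENNReal.ofReal (5000 * l) := by
  set Bs := {x : ℝ × ℝ | |l ^ 2 - x.1 * x.2| ≤ l ∧ (x.1 + x.2) ^ 2 ≤ 400 * |x.1 * x.2|}
    with hBsdef
  have hsql : Real.sqrt l ^ 2 = l := Real.sq_sqrt hl.le
  have hsq0 : 0 < Real.sqrt l := Real.sqrt_pos.mpr hl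
  set S := 21 * (l + Real.sqrt l) with hSdef
  have hm : MeasurableSet Bs := by
    have hcont1 : Continuous fun x : ℝ × ℝ => |l ^ 2 - x.1 * x.2| :=
      (continuous_const.sub (continuous_fst.mul continuous_snd)).abs
    have hcont2 : Continuous fun x : ℝ × ℝ => (x.1 + x.2) ^ 2 :=
      (continuous_fst.add continuous_snd).pow 2
    have hcont3 : Continuous fun x : ℝ × ℝ => 400 * |x.1 * x.2| :=
      continuous_const.mul (continuous_fst.mul continuous_snd).abs
    exact ((isClosed_le hcont1 continuous_const).inter
      (isClosed_le hcont2 hcont3)).measurableSet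
  -- basic facts for members
  have hstlo : ∀ x ∈ Bs, l ^ 2 - l ≤ x.1 * x.2 := by
    intro x hx
    have := abs_le.mp hx.1
    linarith [this.2]
  have hsthi : ∀ x ∈ Bs, |x.1 * x.2| ≤ l ^ 2 + l := by
    intro x hx
    have h := abs_le.mp hx.1
    have hlo := hstlo x hx
    apply abs_le.mpr
    constructor <;> nlinarith [sq_nonneg l]
  have hts : ∀ x ∈ Bs, |x.2| ≤ 402 * |x.1| := fun x hx => abs_ratio hx.2
  have hst : ∀ x ∈ Bs, |x.1| ≤ 402 * |x.2| := by
    intro x hx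
    have h2 : (x.2 + x.1) ^ 2 ≤ 400 * |x.2 * x.1| := by
      rw [mul_comm x.2 x.1]
      calc (x.2 + x.1) ^ 2 = (x.1 + x.2) ^ 2 := by ring
        _ ≤ 400 * |x.1 * x.2| := hx.2
    exact abs_ratio h2
  have hsupp : ∀ x ∈ Bs, |x.1| ≤ S := by
    intro x hx
    have h1 : |x.1| * |x.1| ≤ 402 * (|x.2| * |x.1|) := by
      nlinarith [hst x hx, abs_nonneg x.1]
    have h2 : |x.2| * |x.1| ≤ l ^ 2 + l := by
      calc |x.2| * |x.1| = |x.1 * x.2| := by rw [abs_mul, mul_comm]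
        _ ≤ l ^ 2 + l := hsthi x hx
    have hsq : |x.1| ^ 2 ≤ S ^ 2 := by
      have hS2 : 402 * (l ^ 2 + l) ≤ S ^ 2 := by
        rw [hSdef]; nlinarith [Real.sqrt_nonneg l, hl.le, mul_nonneg hl.le hsq0.le]
      nlinarith
    have hS0 : 0 ≤ S := by positivity
    nlinarith [abs_nonneg x.1]
  -- slice bound through the hyperbola condition
  have hslice : ∀ s : ℝ, s ≠ 0 →
      volume {t : ℝ | (s, t) ∈ Bs} ≤ ENNReal.ofReal (2 * l / |s|) := by
    intro s hs
    have hsub : {t : ℝ | (s, t) ∈ Bs} ⊆ {t : ℝ | s * t ∈ Set.Icc (l ^ 2 - l) (l ^ 2 + l)} := by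
      intro t ht
      have h := abs_le.mp ht.1
      exact Set.mem_Icc.mpr ⟨by linarith [h.2], by linarith [h.1]⟩
    refine le_trans (measure_mono hsub) (le_trans (slice_mul s _ _ hs)
      (ENNReal.ofReal_le_ofReal (le_of_eq ?_)))
    ring
  rcases le_total l 2 with hc | hc
  · -- small case : l ≤ 2
    have h32 : Real.sqrt l ≤ 3 / 2 := by nlinarith [Real.sqrt_nonneg l]
    have hK0 : (0:ℝ) ≤ 41 * Real.sqrt l := by positivity
    have h2 : ∀ s : ℝ, volume {t : ℝ | (s, t) ∈ Bs} ≤ ENNReal.ofReal (41 * Real.sqrt l) := by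
      intro s
      by_cases hs : |s| ≤ Real.sqrt l / 20
      · have hsub : {t : ℝ | (s, t) ∈ Bs} ⊆ Set.Icc (-(402 * |s|)) (402 * |s|) := by
          intro t ht
          exact Set.mem_Icc.mpr (abs_le.mp (hts (s, t) ht))
        refine le_trans (measure_mono hsub) ?_
        rw [Real.volume_Icc]
        apply ENNReal.ofReal_le_ofReal
        nlinarith [abs_nonneg s]
      · push_neg at hs
        have hs0 : s ≠ 0 := by
          intro h
          rw [h, abs_zero] at hs
          linarith
        refine le_trans (hslice s hs0) (ENNReal.ofReal_le_ofReal ?_)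
        rw [div_le_iff₀ (abs_pos.mpr hs0)]
        nlinarith [hsq0.le]
    refine le_trans (fub Bs hm S (41 * Real.sqrt l) hK0 hsupp h2) ?_
    apply ENNReal.ofReal_le_ofReal
    rw [hSdef]
    nlinarith [hsq0.le, hl.le]
  · -- large case : 2 ≤ l
    have h2 : ∀ s : ℝ, volume {t : ℝ | (s, t) ∈ Bs} ≤ ENNReal.ofReal 58 := by
      intro s
      rcases Set.eq_empty_or_nonempty {t : ℝ | (s, t) ∈ Bs} with he | ⟨t, ht⟩
      · rw [he]; simp
      · have h1 : l ^ 2 - l ≤ s * t := hstlo (s, t) ht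
        have h3 : |t| ≤ 402 * |s| := hts (s, t) ht
        have h4 : s * t ≤ |s| * |t| := by
          rw [← abs_mul]; exact le_abs_self _
        have hsl : l / 29 ≤ |s| := by
          nlinarith [abs_nonneg s, abs_nonneg t]
        have hs0 : s ≠ 0 := by
          intro h
          rw [h, abs_zero] at hsl
          nlinarith
        refine le_trans (hslice s hs0) (ENNReal.ofReal_le_ofReal ?_)
        rw [div_le_iff₀ (abs_pos.mpr hs0)]
        nlinarith
    refine le_trans (fub Bs hm S 58 (by norm_num) hsupp h2) ?_
    apply ENNReal.ofReal_le_ofReal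
    have hsl : Real.sqrt l ≤ l := by nlinarith [hsq0.le]
    rw [hSdef]
    nlinarith

/-- There is an absolute constant `C > 0` such that for every `v ∈ ℝ²` with `H(v) ≠ 0`,
the two-dimensional Lebesgue measure of
`{w ∈ ℝ² : |H(v) − H(w)| ≤ 1 and H(v,w)² ≤ 100 |H(v) H(w)|}` is at most `C`. -/
theorem stmt_5 :
    ∃ C : ℝ, 0 < C ∧ ∀ v : ℝ × ℝ, H v ≠ 0 →
      volume {w : ℝ × ℝ | |H v - H w| ≤ 1 ∧ (Hbil v w) ^ 2 ≤ 100 * |H v * H w|}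
        ≤ ENNReal.ofReal C := by
  refine ⟨2500, by norm_num, ?_⟩
  intro v hv
  set p := v.1 + v.2 with hp
  set q := v.1 - v.2 with hq
  set L := H v with hLdef
  have hLpq : L = p * q := by rw [hLdef, hp, hq]; unfold H; ring
  have hlam0 : 0 < |L| := abs_pos.mpr hv
  set T : (ℝ × ℝ) →ₗ[ℝ] (ℝ × ℝ) :=
    Matrix.toLin (Module.Basis.finTwoProd ℝ) (Module.Basis.finTwoProd ℝ) !![q, q; p, -p] with hTdef
  have hdet : LinearMap.det T = -(2 * L) := by
    rw [hTdef, LinearMap.det_toLin, Matrix.det_fin_two_of, hLpq]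
    ring
  have hdet0 : LinearMap.det T ≠ 0 := by
    rw [hdet]
    intro h
    exact hv (by linarith [neg_eq_zero.mp h])
  set Bs := {x : ℝ × ℝ | |L ^ 2 - x.1 * x.2| ≤ |L| ∧ (x.1 + x.2) ^ 2 ≤ 400 * |x.1 * x.2|}
    with hBsdef
  have hpre : {w : ℝ × ℝ | |H v - H w| ≤ 1 ∧ (Hbil v w) ^ 2 ≤ 100 * |H v * H w|}
      = T ⁻¹' Bs := by
    ext w
    have hT : T w = (q * w.1 + q * w.2, p * w.1 + -p * w.2) := by
      rw [hTdef, Matrix.toLin_finTwoProd_apply]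
    simp only [Set.mem_setOf_eq, Set.mem_preimage, hBsdef, hT]
    have hstL : (q * w.1 + q * w.2) * (p * w.1 + -p * w.2) = L * H w := by
      rw [hLpq]; unfold H; ring
    have hsum : (q * w.1 + q * w.2) + (p * w.1 + -p * w.2) = 2 * Hbil v w := by
      rw [hp, hq]; unfold Hbil; ring
    rw [hstL, hsum]
    have habs : |L ^ 2 - L * H w| = |L| * |L - H w| := by
      rw [show L ^ 2 - L * H w = L * (L - H w) by ring, abs_mul]
    constructor
    · rintro ⟨h1, h2⟩
      refine ⟨?_, ?_⟩
      · rw [habs]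
        calc |L| * |L - H w| ≤ |L| * 1 := mul_le_mul_of_nonneg_left h1 (abs_nonneg L)
          _ = |L| := mul_one _
      · nlinarith
    · rintro ⟨h1, h2⟩
      rw [habs] at h1
      refine ⟨?_, ?_⟩
      · nlinarith [abs_nonneg (L - H w)]
      · nlinarith
  rw [hpre, Measure.addHaar_preimage_linearMap volume hdet0]
  have hB : volume Bs ≤ ENNReal.ofReal (5000 * |L|) := by
    have h := Bbound |L| hlam0
    have hsets : Bs = {x : ℝ × ℝ |
        |(|L|) ^ 2 - x.1 * x.2| ≤ |L| ∧ (x.1 + x.2) ^ 2 ≤ 400 * |x.1 * x.2|} := by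
      ext x
      simp only [hBsdef, Set.mem_setOf_eq, sq_abs]
    rw [hsets]
    exact h
  calc ENNReal.ofReal |(LinearMap.det T)⁻¹| * volume Bs
      ≤ ENNReal.ofReal |(LinearMap.det T)⁻¹| * ENNReal.ofReal (5000 * |L|) :=
        mul_le_mul_right hB _
    _ = ENNReal.ofReal (|(LinearMap.det T)⁻¹| * (5000 * |L|)) :=
        (ENNReal.ofReal_mul (abs_nonneg _)).symm
    _ ≤ ENNReal.ofReal 2500 := by
        apply ENNReal.ofReal_le_ofReal
        rw [hdet, abs_inv, abs_neg, abs_mul, abs_two]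
        have h0 : |L| ≠ 0 := ne_of_gt hlam0
        rw [show (2 * |L|)⁻¹ * (5000 * |L|) = 2500 by field_simp; ring]
end

section
/- There is an absolute constant C > 0 such that for every v ∈ ℝ² with H(v) ≠ 0, the two-dimensional Lebesgue measure of the set {u ∈ ℝ² : |H(u+v) − H(u−v)| ≤ 2 and H(u+v, u−v)² > 100 |H(u+v) H(u−v)|} is at most C. -/
set_option maxHeartbeats 1000000

open MeasureTheory

lemma stmt8_sq_helper {c D : ℝ} (hc : 0 ≤ c) (h : 4*c < D) : 16*c^2 ≤ D^2 := by nlinarith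

/-- Core algebraic estimate. -/
lemma stmt8_core (x y h : ℝ) (hh : h ≠ 0)
    (hc : 100 * |(x^2 - h^2) * (y^2 - h^2)| < (x*y - h^2)^2) :
    |x - h| ≤ 4 * |h| ∨ |y - h| ≤ 4 * |h| := by
  by_contra hcon
  push_neg at hcon
  obtain ⟨hA, hB⟩ := hcon
  set A := |x - h| with hAdef
  set B := |y - h| with hBdef
  clear_value A B
  have ht : (0:ℝ) < |h| := abs_pos.mpr hh
  have hA0 : 0 < A := lt_trans (by positivity) hA
  have hB0 : 0 < B := lt_trans (by positivity) hB
  have hxp : A / 2 ≤ |x + h| := by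
    have h1 : A ≤ |x + h| + 2 * |h| := by
      calc A = |(x + h) + (-2) * h| := by rw [hAdef]; ring_nf
        _ ≤ |x + h| + |(-2) * h| := abs_add_le _ _
        _ = |x + h| + 2 * |h| := by rw [abs_mul]; norm_num
    linarith
  have hyp : B / 2 ≤ |y + h| := by
    have h1 : B ≤ |y + h| + 2 * |h| := by
      calc B = |(y + h) + (-2) * h| := by rw [hBdef]; ring_nf
        _ ≤ |y + h| + |(-2) * h| := abs_add_le _ _
        _ = |y + h| + 2 * |h| := by rw [abs_mul]; norm_num
    linarith
  have hx2 : A^2 / 2 ≤ |x^2 - h^2| := by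
    have he : |x^2 - h^2| = A * |x + h| := by rw [hAdef, ← abs_mul]; ring_nf
    rw [he]; nlinarith
  have hy2 : B^2 / 2 ≤ |y^2 - h^2| := by
    have he : |y^2 - h^2| = B * |y + h| := by rw [hBdef, ← abs_mul]; ring_nf
    rw [he]; nlinarith
  have hP : A^2 * B^2 / 4 ≤ |(x^2 - h^2) * (y^2 - h^2)| := by
    rw [abs_mul]
    nlinarith [abs_nonneg (x^2 - h^2), abs_nonneg (y^2 - h^2)]
  have hle : (x^2 - h^2) * (y^2 - h^2) ≤ |(x^2 - h^2) * (y^2 - h^2)| := le_abs_self _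
  have hkey : 99 * |(x^2 - h^2) * (y^2 - h^2)| < h^2 * (x - y)^2 := by nlinarith
  have hxy : |x - y| ≤ A + B := by
    calc |x - y| = |(x - h) + (-(y - h))| := by ring_nf
      _ ≤ |x - h| + |-(y - h)| := abs_add_le _ _
      _ = A + B := by rw [abs_neg, hAdef, hBdef]
  have hxy1 : (x - y)^2 ≤ (A + B)^2 := by
    nlinarith [abs_nonneg (x - y), sq_abs (x - y)]
  have hxy2 : h^2 * (x - y)^2 ≤ h^2 * (A + B)^2 :=
    mul_le_mul_of_nonneg_left hxy1 (sq_nonneg h)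
  have h16 : 16 * h^2 ≤ A^2 := by
    have := stmt8_sq_helper (abs_nonneg h) hA; rwa [sq_abs] at this
  have h16' : 16 * h^2 ≤ B^2 := by
    have := stmt8_sq_helper (abs_nonneg h) hB; rwa [sq_abs] at this
  have hm1 : 16 * h^2 * B^2 ≤ A^2 * B^2 := mul_le_mul_of_nonneg_right h16 (sq_nonneg B)
  have hm2 : 16 * h^2 * A^2 ≤ A^2 * B^2 := by
    have := mul_le_mul_of_nonneg_right h16' (sq_nonneg A); nlinarith
  have hcs : 0 ≤ h^2 * (A - B)^2 := mul_nonneg (sq_nonneg h) (sq_nonneg (A - B))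
  have hab : 0 < A^2 * B^2 := mul_pos (pow_pos hA0 2) (pow_pos hB0 2)
  have e1 : h^2*(A+B)^2 = h^2*A^2 + 2*(h^2*(A*B)) + h^2*B^2 := by ring
  linarith [hP, hkey, hxy2, hm1, hm2, hcs, hab, e1]

/-- An explicit linear map on `ℝ × ℝ`. -/
noncomputable def stmt8_lin (c d e g : ℝ) : (ℝ × ℝ) →ₗ[ℝ] (ℝ × ℝ) :=
  Matrix.toLin (Module.Basis.finTwoProd ℝ) (Module.Basis.finTwoProd ℝ) !![c, d; e, g]

lemma stmt8_lin_apply (c d e g : ℝ) (u : ℝ × ℝ) :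
    stmt8_lin c d e g u = (c * u.1 + d * u.2, e * u.1 + g * u.2) := by
  simp [stmt8_lin, Matrix.toLin_finTwoProd_apply]

lemma stmt8_lin_vol (s : Set (ℝ × ℝ)) (c d e g : ℝ) (h : c * g - d * e ≠ 0) :
    volume ((stmt8_lin c d e g) ⁻¹' s) = ENNReal.ofReal |c * g - d * e|⁻¹ * volume s := by
  have hdet : (stmt8_lin c d e g).det = c * g - d * e := by
    rw [stmt8_lin, LinearMap.det_toLin, Matrix.det_fin_two_of]
  rw [Measure.addHaar_preimage_linearMap volume (by rw [hdet]; exact h), hdet, abs_inv]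

lemma stmt8_rect_vol (a r : ℝ) :
    volume {z : ℝ × ℝ | |z.1 - a| ≤ r ∧ |z.2| ≤ 1}
      = ENNReal.ofReal (2*r) * ENNReal.ofReal 2 := by
  have hset : {z : ℝ × ℝ | |z.1 - a| ≤ r ∧ |z.2| ≤ 1}
      = Set.Icc (a-r) (a+r) ×ˢ Set.Icc (-1 : ℝ) 1 := by
    ext z
    simp only [Set.mem_setOf_eq, Set.mem_prod, Set.mem_Icc, abs_le]
    constructor <;> rintro ⟨⟨h1, h2⟩, h3, h4⟩ <;>
      exact ⟨⟨by linarith, by linarith⟩, by linarith, by linarith⟩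
  rw [hset, Measure.volume_eq_prod, Measure.prod_prod]
  simp only [Real.volume_Icc]
  norm_num
  ring_nf
  rw [ENNReal.ofReal_mul' (by norm_num : (0:ℝ) ≤ 2), ENNReal.ofReal_ofNat]
  ring

/-- There is an absolute constant `C > 0` such that for every `v ∈ ℝ²` with `H(v) ≠ 0`,
the two-dimensional Lebesgue measure of
`{u ∈ ℝ² : |H(u+v) − H(u−v)| ≤ 2 and H(u+v, u−v)² > 100 |H(u+v) H(u−v)|}` is at most `C`. -/
theorem stmt_8 :
    ∃ C : ℝ, 0 < C ∧ ∀ v : ℝ × ℝ, H v ≠ 0 →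
      volume {u : ℝ × ℝ | |H (u + v) - H (u - v)| ≤ 2 ∧
          (Hbil (u + v) (u - v)) ^ 2 > 100 * |H (u + v) * H (u - v)|}
        ≤ ENNReal.ofReal C := by
  refine ⟨16, by norm_num, fun v hv => ?_⟩
  set p : ℝ := v.1 + v.2 with hp
  set q : ℝ := v.1 - v.2 with hq
  set h : ℝ := H v with hh
  have hhpq : h = p * q := by rw [hh, hp, hq, H]; ring
  have hh0 : h ≠ 0 := hv
  have hp0 : p ≠ 0 := fun hc => hh0 (by rw [hhpq, hc, zero_mul])
  have hq0 : q ≠ 0 := fun hc => hh0 (by rw [hhpq, hc, mul_zero])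
  have hth : (0:ℝ) < |h| := abs_pos.mpr hh0
  -- the target rectangle
  set R : Set (ℝ × ℝ) := {z : ℝ × ℝ | |z.1 - h| ≤ 4*|h| ∧ |z.2| ≤ 1} with hR
  -- the two linear maps
  set f₁ := stmt8_lin q q (q+p) (q-p) with hf₁
  set f₂ := stmt8_lin p (-p) (q+p) (q-p) with hf₂
  -- containment
  have hsub : {u : ℝ × ℝ | |H (u + v) - H (u - v)| ≤ 2 ∧
      (Hbil (u + v) (u - v)) ^ 2 > 100 * |H (u + v) * H (u - v)|}
      ⊆ (f₁ ⁻¹' R) ∪ (f₂ ⁻¹' R) := by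
    rintro u ⟨h1, h2⟩
    set x : ℝ := q * (u.1 + u.2) with hx
    set y : ℝ := p * (u.1 - u.2) with hy
    -- |x + y| ≤ 1
    have e0 : H (u + v) - H (u - v) = 2 * (x + y) := by
      simp only [H, hx, hy, hp, hq, Prod.fst_add, Prod.snd_add, Prod.fst_sub, Prod.snd_sub]
      ring
    have hxy1 : |x + y| ≤ 1 := by
      rw [e0] at h1
      rw [abs_mul] at h1
      simp only [abs_two] at h1
      linarith
    -- main condition in (x, y)
    have e1 : x * y - h^2 = h * (Hbil (u + v) (u - v)) := by
      simp only [Hbil, hx, hy, hhpq, hp, hq, Prod.fst_add, Prod.snd_add,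
        Prod.fst_sub, Prod.snd_sub]
      ring
    have e2 : (x^2 - h^2) * (y^2 - h^2) = h^2 * (H (u + v) * H (u - v)) := by
      simp only [H, hx, hy, hhpq, hp, hq, Prod.fst_add, Prod.snd_add,
        Prod.fst_sub, Prod.snd_sub]
      ring
    have hc : 100 * |(x^2 - h^2) * (y^2 - h^2)| < (x*y - h^2)^2 := by
      rw [e1, e2, abs_mul, abs_of_nonneg (sq_nonneg h), mul_pow]
      have hh2 : (0:ℝ) < h^2 := by positivity
      calc 100 * (h^2 * |H (u + v) * H (u - v)|)
          = h^2 * (100 * |H (u + v) * H (u - v)|) := by ring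
        _ < h^2 * (Hbil (u + v) (u - v))^2 := by
            exact (mul_lt_mul_iff_right₀ hh2).mpr h2
    have hcore := stmt8_core x y h hh0 hc
    rcases hcore with hco | hco
    · left
      show f₁ u ∈ R
      have : f₁ u = (x, x + y) := by
        rw [hf₁, stmt8_lin_apply]
        refine Prod.ext ?_ ?_ <;> simp only [hx, hy] <;> ring
      rw [this, hR]
      exact ⟨hco, hxy1⟩
    · right
      show f₂ u ∈ R
      have : f₂ u = (y, x + y) := by
        rw [hf₂, stmt8_lin_apply]
        refine Prod.ext ?_ ?_ <;> simp only [hx, hy] <;> ring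
      rw [this, hR]
      exact ⟨hco, hxy1⟩
  -- volume computation
  have hd1 : q * (q - p) - q * (q + p) = -(2*h) := by rw [hhpq]; ring
  have hd2 : p * (q - p) - (-p) * (q + p) = 2*h := by rw [hhpq]; ring
  have hvR : volume R = ENNReal.ofReal (2*(4*|h|)) * ENNReal.ofReal 2 := stmt8_rect_vol h (4*|h|)
  have hv1 : volume (f₁ ⁻¹' R) = ENNReal.ofReal 8 := by
    rw [hf₁, stmt8_lin_vol R q q (q+p) (q-p) (by rw [hd1]; simp [hh0]), hd1, hvR]
    rw [← ENNReal.ofReal_mul (by positivity), ← ENNReal.ofReal_mul (by positivity)]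
    congr 1
    rw [abs_neg, abs_mul, abs_two]
    field_simp
    ring
  have hv2 : volume (f₂ ⁻¹' R) = ENNReal.ofReal 8 := by
    rw [hf₂, stmt8_lin_vol R p (-p) (q+p) (q-p) (by rw [hd2]; simp [hh0]), hd2, hvR]
    rw [← ENNReal.ofReal_mul (by positivity), ← ENNReal.ofReal_mul (by positivity)]
    congr 1
    rw [abs_mul, abs_two]
    field_simp
    ring
  calc volume {u : ℝ × ℝ | |H (u + v) - H (u - v)| ≤ 2 ∧
          (Hbil (u + v) (u - v)) ^ 2 > 100 * |H (u + v) * H (u - v)|}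
      ≤ volume ((f₁ ⁻¹' R) ∪ (f₂ ⁻¹' R)) := measure_mono hsub
    _ ≤ volume (f₁ ⁻¹' R) + volume (f₂ ⁻¹' R) := measure_union_le _ _
    _ = ENNReal.ofReal 8 + ENNReal.ofReal 8 := by rw [hv1, hv2]
    _ = ENNReal.ofReal 16 := by rw [← ENNReal.ofReal_add] <;> norm_num
end

section
/- There is an absolute constant C > 0 such that for every δ > 0, the two-dimensional Lebesgue measure of the set {(α,β) ∈ ℝ² : |α + β| ≤ δ and (αβ − 1)² > 100 |(α² − 1)(β² − 1)|} is at most C δ. -/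
open MeasureTheory

lemma stmt9_arith (a b : ℝ) (ha : 2 < |a|) (hb : 2 < |b|) :
    (a * b - 1) ^ 2 ≤ 100 * |(a ^ 2 - 1) * (b ^ 2 - 1)| := by
  have ha2 : 4 < a ^ 2 := by nlinarith [sq_abs a, abs_nonneg a]
  have hb2 : 4 < b ^ 2 := by nlinarith [sq_abs b, abs_nonneg b]
  have h1 : 0 < a ^ 2 - 1 := by linarith
  have h2 : 0 < b ^ 2 - 1 := by linarith
  rw [abs_of_pos (mul_pos h1 h2)]
  nlinarith [sq_nonneg (a + b), sq_nonneg (a - b), mul_pos h1 h2]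

lemma stmt9_slab1 (δ : ℝ) (hδ : 0 < δ) :
    volume {p : ℝ × ℝ | |p.1| ≤ 2 ∧ |p.1 + p.2| ≤ δ} ≤ ENNReal.ofReal (8 * δ) := by
  set S : Set (ℝ × ℝ) := {p : ℝ × ℝ | |p.1| ≤ 2 ∧ |p.1 + p.2| ≤ δ} with hS
  have hs : MeasurableSet S := by
    have h' : S = {p : ℝ × ℝ | |p.1| ≤ 2} ∩ {p : ℝ × ℝ | |p.1 + p.2| ≤ δ} := rfl
    rw [h']
    exact (measurableSet_le measurable_fst.abs measurable_const).inter
      (measurableSet_le (measurable_fst.add measurable_snd).abs measurable_const)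
  rw [show (volume : Measure (ℝ × ℝ)) = (volume : Measure ℝ).prod volume from rfl,
    Measure.prod_apply hs]
  have key : ∀ a : ℝ, volume (Prod.mk a ⁻¹' S)
      ≤ Set.indicator (Set.Icc (-2 : ℝ) 2) (fun _ => ENNReal.ofReal (2 * δ)) a := by
    intro a
    by_cases h : |a| ≤ 2
    · have hsub : Prod.mk a ⁻¹' S ⊆ Set.Icc (-δ - a) (δ - a) := by
        intro b hb
        obtain ⟨-, hb2⟩ := hb
        obtain ⟨h1, h2⟩ := abs_le.1 hb2
        exact ⟨by linarith, by linarith⟩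
      calc volume (Prod.mk a ⁻¹' S) ≤ volume (Set.Icc (-δ - a) (δ - a)) := measure_mono hsub
        _ = ENNReal.ofReal (2 * δ) := by rw [Real.volume_Icc]; ring_nf
        _ = Set.indicator (Set.Icc (-2 : ℝ) 2) (fun _ => ENNReal.ofReal (2 * δ)) a := by
            rw [Set.indicator_of_mem (by simpa [Set.mem_Icc] using abs_le.1 h)]
    · have : Prod.mk a ⁻¹' S = ∅ := by
        ext b; simp only [Set.mem_preimage, Set.mem_empty_iff_false, iff_false]
        intro hb; exact h hb.1
      simp [this]
  calc ∫⁻ a, volume (Prod.mk a ⁻¹' S) ≤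
      ∫⁻ a, Set.indicator (Set.Icc (-2 : ℝ) 2) (fun _ => ENNReal.ofReal (2 * δ)) a :=
        lintegral_mono key
    _ = ENNReal.ofReal (2 * δ) * volume (Set.Icc (-2 : ℝ) 2) := by
        rw [lintegral_indicator measurableSet_Icc, setLIntegral_const]
    _ = ENNReal.ofReal (8 * δ) := by
        rw [Real.volume_Icc, ← ENNReal.ofReal_mul (by positivity)]
        congr 1; ring

lemma stmt9_slab2 (δ : ℝ) (hδ : 0 < δ) :
    volume {p : ℝ × ℝ | |p.2| ≤ 2 ∧ |p.1 + p.2| ≤ δ} ≤ ENNReal.ofReal (8 * δ) := by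
  set S : Set (ℝ × ℝ) := {p : ℝ × ℝ | |p.2| ≤ 2 ∧ |p.1 + p.2| ≤ δ} with hS
  have hs : MeasurableSet S := by
    have h' : S = {p : ℝ × ℝ | |p.2| ≤ 2} ∩ {p : ℝ × ℝ | |p.1 + p.2| ≤ δ} := rfl
    rw [h']
    exact (measurableSet_le measurable_snd.abs measurable_const).inter
      (measurableSet_le (measurable_fst.add measurable_snd).abs measurable_const)
  rw [show (volume : Measure (ℝ × ℝ)) = (volume : Measure ℝ).prod volume from rfl,
    Measure.prod_apply_symm hs]
  have key : ∀ b : ℝ, volume ((fun a => (a, b)) ⁻¹' S)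
      ≤ Set.indicator (Set.Icc (-2 : ℝ) 2) (fun _ => ENNReal.ofReal (2 * δ)) b := by
    intro b
    by_cases h : |b| ≤ 2
    · have hsub : (fun a => (a, b)) ⁻¹' S ⊆ Set.Icc (-δ - b) (δ - b) := by
        intro a ha
        obtain ⟨-, ha2⟩ := ha
        obtain ⟨h1, h2⟩ := abs_le.1 ha2
        exact ⟨by linarith, by linarith⟩
      calc volume ((fun a => (a, b)) ⁻¹' S) ≤ volume (Set.Icc (-δ - b) (δ - b)) :=
            measure_mono hsub
        _ = ENNReal.ofReal (2 * δ) := by rw [Real.volume_Icc]; ring_nf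
        _ = Set.indicator (Set.Icc (-2 : ℝ) 2) (fun _ => ENNReal.ofReal (2 * δ)) b := by
            rw [Set.indicator_of_mem (by simpa [Set.mem_Icc] using abs_le.1 h)]
    · have : (fun a => (a, b)) ⁻¹' S = ∅ := by
        ext a; simp only [Set.mem_preimage, Set.mem_empty_iff_false, iff_false]
        intro ha; exact h ha.1
      simp [this]
  calc ∫⁻ b, volume ((fun a => (a, b)) ⁻¹' S) ≤
      ∫⁻ b, Set.indicator (Set.Icc (-2 : ℝ) 2) (fun _ => ENNReal.ofReal (2 * δ)) b :=
        lintegral_mono key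
    _ = ENNReal.ofReal (2 * δ) * volume (Set.Icc (-2 : ℝ) 2) := by
        rw [lintegral_indicator measurableSet_Icc, setLIntegral_const]
    _ = ENNReal.ofReal (8 * δ) := by
        rw [Real.volume_Icc, ← ENNReal.ofReal_mul (by positivity)]
        congr 1; ring

/-- There is an absolute constant `C > 0` such that for every `δ > 0`, the two-dimensional
Lebesgue measure of `{(α,β) ∈ ℝ² : |α + β| ≤ δ and (αβ − 1)² > 100 |(α² − 1)(β² − 1)|}`
is at most `C δ`. -/
theorem stmt_9 :
    ∃ C : ℝ, 0 < C ∧ ∀ δ : ℝ, 0 < δ →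
      volume {p : ℝ × ℝ | |p.1 + p.2| ≤ δ ∧
          (p.1 * p.2 - 1) ^ 2 > 100 * |(p.1 ^ 2 - 1) * (p.2 ^ 2 - 1)|}
        ≤ ENNReal.ofReal (C * δ) := by
  refine ⟨16, by norm_num, fun δ hδ => ?_⟩
  have hsub : {p : ℝ × ℝ | |p.1 + p.2| ≤ δ ∧
      (p.1 * p.2 - 1) ^ 2 > 100 * |(p.1 ^ 2 - 1) * (p.2 ^ 2 - 1)|} ⊆
      {p : ℝ × ℝ | |p.1| ≤ 2 ∧ |p.1 + p.2| ≤ δ} ∪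
      {p : ℝ × ℝ | |p.2| ≤ 2 ∧ |p.1 + p.2| ≤ δ} := by
    rintro ⟨a, b⟩ ⟨h1, h2⟩
    by_cases ha : |a| ≤ 2
    · exact Or.inl ⟨ha, h1⟩
    · by_cases hb : |b| ≤ 2
      · exact Or.inr ⟨hb, h1⟩
      · exfalso
        exact absurd (stmt9_arith a b (lt_of_not_ge ha) (lt_of_not_ge hb)) (not_le.2 h2)
  calc volume {p : ℝ × ℝ | |p.1 + p.2| ≤ δ ∧
      (p.1 * p.2 - 1) ^ 2 > 100 * |(p.1 ^ 2 - 1) * (p.2 ^ 2 - 1)|}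
      ≤ volume ({p : ℝ × ℝ | |p.1| ≤ 2 ∧ |p.1 + p.2| ≤ δ} ∪
          {p : ℝ × ℝ | |p.2| ≤ 2 ∧ |p.1 + p.2| ≤ δ}) := measure_mono hsub
    _ ≤ volume {p : ℝ × ℝ | |p.1| ≤ 2 ∧ |p.1 + p.2| ≤ δ} +
        volume {p : ℝ × ℝ | |p.2| ≤ 2 ∧ |p.1 + p.2| ≤ δ} := measure_union_le _ _
    _ ≤ ENNReal.ofReal (8 * δ) + ENNReal.ofReal (8 * δ) :=
        add_le_add (stmt9_slab1 δ hδ) (stmt9_slab2 δ hδ)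
    _ = ENNReal.ofReal (16 * δ) := by
        rw [← ENNReal.ofReal_add (by positivity) (by positivity)]; ring_nf
end

section
/- There is an absolute constant C > 0 such that for every v = (v₁,v₂) ∈ ℝ × ℤ with H(v) ≠ 0 and every u₂ ∈ ℤ, the Lebesgue measure of the set {u₁ ∈ ℝ : |H(u+v) − H(u−v)| ≤ 2, H(u+v, u−v)² > 100 |H(u+v) H(u−v)|, u₁+v₁ ≥ u₂+v₂ ≥ 0, and u₁−v₁ ≥ u₂−v₂ ≥ 0} is at most C, where u = (u₁,u₂). -/
set_option maxHeartbeats 1000000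


open MeasureTheory
open scoped ENNReal

/-- Main measure bound, for an abstract set whose members satisfy the derived facts. -/
lemma aux_main (v₁ : ℝ) (v₂ : ℤ) (hb : v₁ ^ 2 - (v₂ : ℝ) ^ 2 ≠ 0) (u₂ : ℤ) (S : Set ℝ)
    (hS : ∀ u₁ ∈ S,
      |u₁ * v₁ - (u₂ : ℝ) * (v₂ : ℝ)| ≤ 1 / 2 ∧
      (u₂ : ℝ) + (v₂ : ℝ) ≥ 0 ∧ (u₂ : ℝ) - (v₂ : ℝ) ≥ 0 ∧ (u₂ : ℝ) ≤ u₁ ∧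
      0 ≤ (u₁ ^ 2 - (u₂ : ℝ) ^ 2) + (v₁ ^ 2 - (v₂ : ℝ) ^ 2) ∧
      ((u₁ ^ 2 - (u₂ : ℝ) ^ 2) - (v₁ ^ 2 - (v₂ : ℝ) ^ 2)) ^ 2 >
        100 * ((u₁ ^ 2 - (u₂ : ℝ) ^ 2) + (v₁ ^ 2 - (v₂ : ℝ) ^ 2)) ^ 2 - 100) :
    volume S ≤ ENNReal.ofReal 10 := by
  rcases le_or_gt (1 / 5 : ℝ) |v₁| with hc | hc
  · -- Case I : |v₁| ≥ 1/5, first condition confines u₁ to an interval of length ≤ 5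
    have hv₁ : v₁ ≠ 0 := by
      intro h; rw [h, abs_zero] at hc; norm_num at hc
    set c := (u₂ : ℝ) * (v₂ : ℝ) / v₁ with hc_def
    have hsub : S ⊆ Set.Icc (c - 5 / 2) (c + 5 / 2) := by
      intro u₁ hu
      obtain ⟨F1, -⟩ := hS u₁ hu
      have e : u₁ - c = (u₁ * v₁ - (u₂ : ℝ) * (v₂ : ℝ)) / v₁ := by
        rw [hc_def]; field_simp
      have h2 : |u₁ - c| ≤ 5 / 2 := by
        rw [e, abs_div, div_le_iff₀ (abs_pos.mpr hv₁)]
        nlinarith [F1, hc, abs_nonneg (u₁ * v₁ - (u₂ : ℝ) * (v₂ : ℝ))]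
      have := abs_le.mp h2
      exact ⟨by linarith [this.1], by linarith [this.2]⟩
    calc volume S ≤ volume (Set.Icc (c - 5 / 2) (c + 5 / 2)) := measure_mono hsub
      _ = ENNReal.ofReal (c + 5 / 2 - (c - 5 / 2)) := Real.volume_Icc
      _ ≤ ENNReal.ofReal 10 := ENNReal.ofReal_le_ofReal (by linarith)
  · have hb' : v₁ ^ 2 < 1 / 25 := by nlinarith [sq_abs v₁, abs_nonneg v₁]
    by_cases hv₂ : v₂ = 0
    · -- Case II.a : v₂ = 0, so b = v₁² ∈ (0, 1/25)
      subst hv₂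
      have hbpos : 0 < v₁ ^ 2 := by
        rcases lt_or_eq_of_le (sq_nonneg v₁) with h | h
        · exact h
        · exfalso; apply hb; push_cast; rw [← h]; ring
      have hsub : S ⊆ Set.Icc (u₂ : ℝ) ((u₂ : ℝ) + 2) := by
        intro u₁ hu
        obtain ⟨F1, h4, h6, F3, A, B⟩ := hS u₁ hu
        push_cast at h4 h6 A B
        have hu₂0 : (0 : ℝ) ≤ (u₂ : ℝ) := by linarith
        -- N := u₁² - u₂² + v₁² < 2
        have hN2 : u₁ ^ 2 - (u₂ : ℝ) ^ 2 + v₁ ^ 2 < 2 := by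
          by_contra hcon
          push_neg at hcon
          nlinarith [A, B, hbpos, hb']
        have : u₁ ≤ (u₂ : ℝ) + 2 := by nlinarith [hN2, hbpos, F3, hu₂0]
        exact ⟨F3, this⟩
      calc volume S ≤ volume (Set.Icc (u₂ : ℝ) ((u₂ : ℝ) + 2)) := measure_mono hsub
        _ = ENNReal.ofReal ((u₂ : ℝ) + 2 - (u₂ : ℝ)) := Real.volume_Icc
        _ ≤ ENNReal.ofReal 10 := ENNReal.ofReal_le_ofReal (by linarith)
    · -- Case II.b : |v₁| < 1/5 and v₂ ≠ 0
      have hv₂' : (1 : ℝ) ≤ |(v₂ : ℝ)| := by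
        have := Int.one_le_abs hv₂
        calc (1 : ℝ) ≤ (|v₂| : ℤ) := by exact_mod_cast this
          _ = |(v₂ : ℝ)| := by push_cast; ring
      rcases Set.eq_empty_or_nonempty S with rfl | ⟨w, hw⟩
      · simp
      obtain ⟨F1w, h4, h6, F3w, Aw, Bw⟩ := hS w hw
      have hvu : |(v₂ : ℝ)| ≤ (u₂ : ℝ) := abs_le.mpr ⟨by linarith, by linarith⟩
      have hu₂1 : (1 : ℝ) ≤ (u₂ : ℝ) := le_trans hv₂' hvu
      have hv₂sq : (1 : ℝ) ≤ (v₂ : ℝ) ^ 2 := by nlinarith [hv₂', sq_abs (v₂ : ℝ)]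
      have hvu2 : (v₂ : ℝ) ^ 2 ≤ (u₂ : ℝ) ^ 2 := by
        nlinarith [hvu, abs_nonneg (v₂ : ℝ), sq_abs (v₂ : ℝ)]
      have hbneg : v₁ ^ 2 - (v₂ : ℝ) ^ 2 < 0 := by linarith
      -- bound on N at the witness point w
      have hNw : (w ^ 2 - (u₂ : ℝ) ^ 2) + (v₁ ^ 2 - (v₂ : ℝ) ^ 2) <
          (100 - 22 * (v₁ ^ 2 - (v₂ : ℝ) ^ 2)) / 99 := by
        by_contra hcon
        push_neg at hcon
        nlinarith [Bw, Aw, hbneg,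
          mul_nonneg (neg_nonneg.mpr hbneg.le)
            (sub_nonneg.mpr hcon),
          mul_nonneg Aw (sub_nonneg.mpr hcon)]
      have hw3 : w < 3 * (u₂ : ℝ) := by
        by_contra hcon
        push_neg at hcon
        nlinarith [hNw, hvu2, hv₂sq, hu₂1, F3w, hb',
          mul_le_mul hcon hcon (by linarith) (by linarith)]
      have hwpos : (0 : ℝ) < w := by linarith
      -- lower bound on |v₁| from the first condition at w
      have hF1w' : (u₂ : ℝ) * |(v₂ : ℝ)| - 1 / 2 ≤ w * |v₁| := by
        have h1 : |(u₂ : ℝ) * (v₂ : ℝ)| - |w * v₁| ≤ 1 / 2 := by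
          have h2 := abs_sub_abs_le_abs_sub ((u₂ : ℝ) * (v₂ : ℝ)) (w * v₁)
          rw [abs_sub_comm] at h2
          linarith [F1w, h2]
        rw [abs_mul, abs_mul, abs_of_nonneg (by linarith : (0:ℝ) ≤ (u₂ : ℝ)),
          abs_of_nonneg hwpos.le] at h1
        linarith
      have hv₁6 : 1 / 6 < |v₁| := by
        by_contra h
        push_neg at h
        have h1 : (1 : ℝ) ≤ (u₂ : ℝ) * |(v₂ : ℝ)| := by nlinarith [hv₂', hu₂1]
        nlinarith [hF1w', hw3, hu₂1, hwpos, abs_nonneg v₁,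
          mul_le_mul_of_nonneg_left h hwpos.le]
      have hv₁0 : v₁ ≠ 0 := by
        intro h; rw [h, abs_zero] at hv₁6; norm_num at hv₁6
      set c := (u₂ : ℝ) * (v₂ : ℝ) / v₁ with hc_def
      have hsub : S ⊆ Set.Icc (c - 3) (c + 3) := by
        intro u₁ hu
        obtain ⟨F1, -⟩ := hS u₁ hu
        have e : u₁ - c = (u₁ * v₁ - (u₂ : ℝ) * (v₂ : ℝ)) / v₁ := by
          rw [hc_def]; field_simp
        have h2 : |u₁ - c| ≤ 3 := by
          rw [e, abs_div, div_le_iff₀ (abs_pos.mpr hv₁0)]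
          nlinarith [F1, hv₁6, abs_nonneg (u₁ * v₁ - (u₂ : ℝ) * (v₂ : ℝ))]
        have := abs_le.mp h2
        exact ⟨by linarith [this.1], by linarith [this.2]⟩
      calc volume S ≤ volume (Set.Icc (c - 3) (c + 3)) := measure_mono hsub
        _ = ENNReal.ofReal (c + 3 - (c - 3)) := Real.volume_Icc
        _ ≤ ENNReal.ofReal 10 := ENNReal.ofReal_le_ofReal (by linarith)

/-- There is an absolute constant `C > 0` such that for every `v = (v₁,v₂) ∈ ℝ × ℤ` with
`H(v) ≠ 0` and every `u₂ ∈ ℤ`, the Lebesgue measure of the set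
`{u₁ ∈ ℝ : |H(u+v) − H(u−v)| ≤ 2, H(u+v, u−v)² > 100 |H(u+v) H(u−v)|,
u₁+v₁ ≥ u₂+v₂ ≥ 0, and u₁−v₁ ≥ u₂−v₂ ≥ 0}` is at most `C`, where `u = (u₁,u₂)`. -/
theorem stmt_10 :
    ∃ C : ℝ, 0 < C ∧ ∀ (v₁ : ℝ) (v₂ : ℤ), H (v₁, (v₂ : ℝ)) ≠ 0 → ∀ u₂ : ℤ,
      volume {u₁ : ℝ |
          |H ((u₁, (u₂ : ℝ)) + (v₁, (v₂ : ℝ))) - H ((u₁, (u₂ : ℝ)) - (v₁, (v₂ : ℝ)))| ≤ 2 ∧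
          (Hbil ((u₁, (u₂ : ℝ)) + (v₁, (v₂ : ℝ))) ((u₁, (u₂ : ℝ)) - (v₁, (v₂ : ℝ)))) ^ 2 >
            100 * |H ((u₁, (u₂ : ℝ)) + (v₁, (v₂ : ℝ))) * H ((u₁, (u₂ : ℝ)) - (v₁, (v₂ : ℝ)))| ∧
          u₁ + v₁ ≥ (u₂ : ℝ) + (v₂ : ℝ) ∧ (u₂ : ℝ) + (v₂ : ℝ) ≥ 0 ∧
          u₁ - v₁ ≥ (u₂ : ℝ) - (v₂ : ℝ) ∧ (u₂ : ℝ) - (v₂ : ℝ) ≥ 0}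
        ≤ ENNReal.ofReal C := by
  refine ⟨10, by norm_num, ?_⟩
  intro v₁ v₂ hv u₂
  have hb : v₁ ^ 2 - (v₂ : ℝ) ^ 2 ≠ 0 := by simpa [H] using hv
  apply aux_main v₁ v₂ hb u₂
  intro u₁ hu
  obtain ⟨h1, h2, h3, h4, h5, h6⟩ := hu
  simp only [H, Hbil, Prod.mk_add_mk, Prod.mk_sub_mk] at h1 h2
  have h1' := abs_le.mp h1
  have F1 : |u₁ * v₁ - (u₂ : ℝ) * (v₂ : ℝ)| ≤ 1 / 2 :=
    abs_le.mpr ⟨by nlinarith [h1'.1], by nlinarith [h1'.2]⟩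
  have hP : (0 : ℝ) ≤ (u₁ + v₁) ^ 2 - ((u₂ : ℝ) + (v₂ : ℝ)) ^ 2 := by nlinarith [h3, h4]
  have hQ : (0 : ℝ) ≤ (u₁ - v₁) ^ 2 - ((u₂ : ℝ) - (v₂ : ℝ)) ^ 2 := by nlinarith [h5, h6]
  rw [abs_of_nonneg (mul_nonneg hP hQ)] at h2
  have hh : (u₁ * v₁ - (u₂ : ℝ) * (v₂ : ℝ)) ^ 2 ≤ 1 / 4 := by
    have := abs_le.mp F1
    nlinarith [this.1, this.2]
  refine ⟨F1, h4, h6, by linarith, by nlinarith [hP, hQ], by nlinarith [h2, hh]⟩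
end

section
/- There is an absolute constant C > 0 such that for every real N ≥ 2 and every C₀ ∈ ℝ, one has |{w ∈ ℝ² : |H(w) − C₀| ≤ 1 and |w| ≤ N}|_{ℝ×ℤ} ≤ C log N. -/
open MeasureTheory
open scoped ENNReal

lemma slice_subset (t : ℝ) : {x : ℝ | |x^2 - t| ≤ 1} ⊆
    Set.Icc (-(Real.sqrt (t+1))) (-(Real.sqrt (t-1))) ∪
      Set.Icc (Real.sqrt (t-1)) (Real.sqrt (t+1)) := by
  intro x hx
  rw [Set.mem_setOf_eq, abs_le] at hx
  rcases le_or_gt 0 x with h | h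
  · right
    refine ⟨?_, ?_⟩
    · calc Real.sqrt (t-1) ≤ Real.sqrt (x^2) := Real.sqrt_le_sqrt (by linarith [hx.2])
        _ = x := by rw [Real.sqrt_sq h]
    · calc x = Real.sqrt (x^2) := (Real.sqrt_sq h).symm
        _ ≤ Real.sqrt (t+1) := Real.sqrt_le_sqrt (by linarith [hx.1])
  · left
    have h' : 0 ≤ -x := by linarith
    have hx2 : (-x)^2 = x^2 := by ring
    constructor
    · have : -x ≤ Real.sqrt (t+1) := by
        calc -x = Real.sqrt ((-x)^2) := (Real.sqrt_sq h').symm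
          _ ≤ Real.sqrt (t+1) := Real.sqrt_le_sqrt (by rw [hx2]; linarith [hx.1])
      linarith
    · have : Real.sqrt (t-1) ≤ -x := by
        calc Real.sqrt (t-1) ≤ Real.sqrt ((-x)^2) := Real.sqrt_le_sqrt (by rw [hx2]; linarith [hx.2])
          _ = -x := Real.sqrt_sq h'
      linarith

lemma slice_vol (t : ℝ) : volume {x : ℝ | |x^2 - t| ≤ 1} ≤
    ENNReal.ofReal (2*(Real.sqrt (t+1) - Real.sqrt (t-1))) := by
  have hd : 0 ≤ Real.sqrt (t+1) - Real.sqrt (t-1) := by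
    have := Real.sqrt_le_sqrt (show t-1 ≤ t+1 by linarith)
    linarith
  calc volume {x : ℝ | |x^2 - t| ≤ 1} ≤
      volume (Set.Icc (-(Real.sqrt (t+1))) (-(Real.sqrt (t-1))) ∪
        Set.Icc (Real.sqrt (t-1)) (Real.sqrt (t+1))) := measure_mono (slice_subset t)
    _ ≤ ENNReal.ofReal (-(Real.sqrt (t-1)) - -(Real.sqrt (t+1))) +
        ENNReal.ofReal (Real.sqrt (t+1) - Real.sqrt (t-1)) := by
        refine (measure_union_le _ _).trans ?_
        rw [Real.volume_Icc, Real.volume_Icc]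
    _ = ENNReal.ofReal (2*(Real.sqrt (t+1) - Real.sqrt (t-1))) := by
        rw [← ENNReal.ofReal_add (by linarith) hd]
        ring_nf

lemma diff_le_sqrt2 (t : ℝ) : Real.sqrt (t+1) - Real.sqrt (t-1) ≤ Real.sqrt 2 := by
  rcases le_or_gt t 1 with h | h
  · have h1 : Real.sqrt (t+1) ≤ Real.sqrt 2 := Real.sqrt_le_sqrt (by linarith)
    have h2 : 0 ≤ Real.sqrt (t-1) := Real.sqrt_nonneg _
    linarith
  · have ha : (Real.sqrt (t+1))^2 = t+1 := Real.sq_sqrt (by linarith)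
    have hb : (Real.sqrt (t-1))^2 = t-1 := Real.sq_sqrt (by linarith)
    have hc : (Real.sqrt 2)^2 = 2 := Real.sq_sqrt (by norm_num)
    have hb' : Real.sqrt 2 ≤ Real.sqrt (t+1) := Real.sqrt_le_sqrt (by linarith)
    nlinarith [Real.sqrt_nonneg (t-1), Real.sqrt_nonneg 2, Real.sqrt_nonneg (t+1)]

lemma diff_le_inv {t u : ℝ} (hu : 0 < u) (h : u^2 ≤ t - 1) :
    Real.sqrt (t+1) - Real.sqrt (t-1) ≤ 1/u := by
  have ht : (1:ℝ) ≤ t := by nlinarith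
  have ha : (Real.sqrt (t+1))^2 = t+1 := Real.sq_sqrt (by linarith)
  have hb : (Real.sqrt (t-1))^2 = t-1 := Real.sq_sqrt (by linarith)
  have hbu : u ≤ Real.sqrt (t-1) := by
    calc u = Real.sqrt (u^2) := (Real.sqrt_sq hu.le).symm
      _ ≤ Real.sqrt (t-1) := Real.sqrt_le_sqrt h
  have hab : Real.sqrt (t-1) ≤ Real.sqrt (t+1) := Real.sqrt_le_sqrt (by linarith)
  have h2u : 0 < Real.sqrt (t+1) + Real.sqrt (t-1) := by nlinarith
  rw [le_div_iff₀ hu]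
  nlinarith [mul_nonneg (sub_nonneg.2 hab) (sub_nonneg.2 hbu),
    sq_nonneg (Real.sqrt (t+1) - Real.sqrt (t-1))]

lemma hsum (L : ℤ) (N' : ℝ) (hL : (L:ℝ) ≤ N') (hN : 1 ≤ N') :
    ∑ m ∈ Finset.Icc (1:ℤ) L, 2/((m:ℝ)) ≤ 2 + 2*Real.log N' := by
  have hlog : 0 ≤ Real.log N' := Real.log_nonneg hN
  rcases le_or_gt L 0 with h | h
  · rw [Finset.Icc_eq_empty (by omega)]
    simp; linarith
  · have hnat : ∑ m ∈ Finset.Icc (1:ℤ) L, 2/((m:ℝ)) =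
        ∑ i ∈ Finset.Icc (1:ℕ) L.toNat, 2/((i:ℝ)) := by
      refine Finset.sum_nbij' (fun m => m.toNat) (fun i => (i:ℤ)) ?_ ?_ ?_ ?_ ?_
      · intro m hm; simp only [Finset.mem_Icc] at *; omega
      · intro i hi; simp only [Finset.mem_Icc] at *; omega
      · intro m hm; simp only [Finset.mem_Icc] at hm
        simp only [Int.toNat_of_nonneg (show (0:ℤ) ≤ m by omega)]
      · intro i hi; simp
      · intro m hm; simp only [Finset.mem_Icc] at hm
        have hmm : ((m.toNat:ℕ):ℝ) = (m:ℝ) := by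
          exact_mod_cast congrArg (fun z : ℤ => (z : ℝ)) (Int.toNat_of_nonneg (show (0:ℤ) ≤ m by omega))
        rw [hmm]
    rw [hnat]
    have h1 : ∑ i ∈ Finset.Icc (1:ℕ) L.toNat, 2/((i:ℝ)) =
        2 * ((harmonic L.toNat : ℚ) : ℝ) := by
      rw [harmonic_eq_sum_Icc]
      push_cast
      rw [Finset.mul_sum]
      apply Finset.sum_congr rfl
      intro i _; rw [div_eq_mul_inv]
    rw [h1]
    have h2 : ((harmonic L.toNat : ℚ) : ℝ) ≤ 1 + Real.log L.toNat :=
      harmonic_le_one_add_log _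
    have hLN : ((L.toNat : ℕ) : ℝ) ≤ N' := by
      rwa [show ((L.toNat : ℕ) : ℝ) = ((L:ℝ)) from
        by exact_mod_cast congrArg (fun z : ℤ => (z : ℝ)) (Int.toNat_of_nonneg h.le)]
    have h3 : Real.log L.toNat ≤ Real.log N' := by
      apply Real.log_le_log (by exact_mod_cast (by omega : 0 < L.toNat)) hLN
    linarith

lemma sym_sum (M : ℤ) (g : ℤ → ℝ) (hg : ∀ n, 0 ≤ g n) (he : ∀ n, g (-n) = g n) :
    ∑ n ∈ Finset.Icc (-M) M, g n ≤ 2 * ∑ n ∈ Finset.Icc 0 M, g n := by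
  rw [← Finset.sum_filter_add_sum_filter_not (Finset.Icc (-M) M) (fun n => 0 ≤ n) g]
  have h1 : (Finset.Icc (-M) M).filter (fun n => 0 ≤ n) = Finset.Icc 0 M := by
    ext n; simp only [Finset.mem_filter, Finset.mem_Icc]; omega
  have h2 : ∑ n ∈ (Finset.Icc (-M) M).filter (fun n => ¬ 0 ≤ n), g n =
      ∑ n ∈ Finset.Icc 1 M, g n := by
    refine Finset.sum_nbij' (fun n => -n) (fun n => -n) ?_ ?_ ?_ ?_ ?_
    · intro n hn; simp only [Finset.mem_filter, Finset.mem_Icc] at *; omega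
    · intro n hn; simp only [Finset.mem_filter, Finset.mem_Icc] at *
      constructor
      · omega
      · omega
    · intro n _; ring
    · intro n _; ring
    · intro n _; exact (he n).symm
  have h3 : ∑ n ∈ Finset.Icc (1:ℤ) M, g n ≤ ∑ n ∈ Finset.Icc 0 M, g n := by
    apply Finset.sum_le_sum_of_subset_of_nonneg
    · apply Finset.Icc_subset_Icc_left; omega
    · intro i _ _; exact hg i
  rw [h1, h2]; linarith

set_option maxHeartbeats 2000000 in
/-- There is an absolute constant `C > 0` such that for every real `N ≥ 2` and every `C₀ ∈ ℝ`,
one has `|{w ∈ ℝ² : |H(w) − C₀| ≤ 1 and |w| ≤ N}|_{ℝ×ℤ} ≤ C log N`. -/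
theorem stmt_11 :
    ∃ C : ℝ, 0 < C ∧ ∀ N C₀ : ℝ, 2 ≤ N →
      measureRZ {w : ℝ × ℝ | |H w - C₀| ≤ 1 ∧ Real.sqrt (w.1 ^ 2 + w.2 ^ 2) ≤ N}
        ≤ ENNReal.ofReal (C * Real.log N) := by
  refine ⟨100, by norm_num, fun N C₀ hN => ?_⟩
  have hlog2 : (0.6931471803:ℝ) < Real.log 2 := Real.log_two_gt_d9
  have hlogN : Real.log 2 ≤ Real.log N := Real.log_le_log (by norm_num) hN
  set s : ℝ := Real.sqrt (1 - C₀) with hs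
  have hs0 : 0 ≤ s := Real.sqrt_nonneg _
  have hs2 : 1 - C₀ ≤ s^2 := by
    rcases le_or_gt (1 - C₀) 0 with h | h
    · nlinarith
    · rw [hs, Real.sq_sqrt h.le]
  set k : ℤ := ⌊s⌋ with hk
  have hk0 : 0 ≤ k := Int.floor_nonneg.mpr hs0
  have hks : (k:ℝ) ≤ s := Int.floor_le s
  have hsk : s < (k:ℝ) + 1 := Int.lt_floor_add_one s
  set M : ℤ := ⌊N⌋ with hM
  have hM2 : 2 ≤ M := by
    rw [hM]; exact_mod_cast Int.le_floor.mpr (by exact_mod_cast hN)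
  have hMN : (M:ℝ) ≤ N := Int.floor_le N
  have hNM : N < (M:ℝ) + 1 := Int.lt_floor_add_one N
  -- the slice sets
  set T : ℤ → Set ℝ := fun n =>
    {x : ℝ | |x ^ 2 - (n:ℝ) ^ 2 - C₀| ≤ 1 ∧ Real.sqrt (x ^ 2 + (n:ℝ) ^ 2) ≤ N} with hT
  have hslice : ∀ n : ℤ, {x : ℝ | (x, (n : ℝ)) ∈
      {w : ℝ × ℝ | |H w - C₀| ≤ 1 ∧ Real.sqrt (w.1 ^ 2 + w.2 ^ 2) ≤ N}} = T n := by
    intro n; ext x; simp [H, hT]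
  -- slices vanish outside Icc (-M) M
  have hvanish : ∀ n : ℤ, n ∉ Finset.Icc (-M) M → volume (T n) = 0 := by
    intro n hn
    have habs : M + 1 ≤ |n| := by
      simp only [Finset.mem_Icc, not_and_or, not_le] at hn
      rcases le_total 0 n with h | h
      · rw [abs_of_nonneg h]; omega
      · rw [abs_of_nonpos h]; omega
    have hTn : T n = ∅ := by
      rw [Set.eq_empty_iff_forall_notMem]
      intro x hx
      have h1 : Real.sqrt (x ^ 2 + (n:ℝ) ^ 2) ≤ N := hx.2
      have h2 : |(n:ℝ)| ≤ Real.sqrt (x ^ 2 + (n:ℝ) ^ 2) := by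
        rw [← Real.sqrt_sq_eq_abs]
        exact Real.sqrt_le_sqrt (by nlinarith [sq_nonneg x])
      have h3 : ((M:ℝ) + 1) ≤ |(n:ℝ)| := by
        rw [← Int.cast_abs]; exact_mod_cast habs
      linarith
    rw [hTn]; exact measure_empty
  -- the dominating function
  set g : ℤ → ℝ := fun n =>
    if |n| = 0 ∨ |n| = k ∨ |n| = k + 1 then 2*Real.sqrt 2
    else if k + 2 ≤ |n| then 2/(((|n| - k - 1 : ℤ)):ℝ) else 0 with hg
  have hg0 : ∀ n, 0 ≤ g n := by
    intro n
    simp only [hg]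
    split_ifs with h1 h2
    · positivity
    · apply div_nonneg (by norm_num)
      have h3 : (1:ℤ) ≤ |n| - k - 1 := by omega
      have h4 : (1:ℝ) ≤ ((|n| - k - 1 : ℤ) : ℝ) := by exact_mod_cast h3
      linarith
    · exact le_rfl
  have hge : ∀ n, g (-n) = g n := by intro n; simp only [hg, abs_neg]
  -- per-slice bound
  have hbound : ∀ n : ℤ, volume (T n) ≤ ENNReal.ofReal (g n) := by
    intro n
    set t : ℝ := (n:ℝ)^2 + C₀ with ht
    have hsub : T n ⊆ {x : ℝ | |x^2 - t| ≤ 1} := by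
      intro x hx
      have h := hx.1
      rw [Set.mem_setOf_eq, ht, ← sub_sub]
      exact h
    have hv : volume (T n) ≤ ENNReal.ofReal (2*(Real.sqrt (t+1) - Real.sqrt (t-1))) :=
      (measure_mono hsub).trans (slice_vol t)
    have hjn : (n:ℝ)^2 = ((|n| : ℤ) : ℝ)^2 := by
      rw [Int.cast_abs, sq_abs]
    by_cases h1 : |n| = 0 ∨ |n| = k ∨ |n| = k + 1
    · simp only [hg]; rw [if_pos h1]
      refine hv.trans (ENNReal.ofReal_le_ofReal ?_)
      have := diff_le_sqrt2 t; linarith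
    · by_cases h2 : k + 2 ≤ |n|
      · simp only [hg]; rw [if_neg h1, if_pos h2]
        set j : ℝ := ((|n| : ℤ) : ℝ) with hj
        have hjk : (k:ℝ) + 2 ≤ j := by rw [hj]; exact_mod_cast h2
        set u : ℝ := ((|n| - k - 1 : ℤ) : ℝ) with hu
        have huj : u = j - (k:ℝ) - 1 := by rw [hu, hj]; push_cast; ring
        have hu1 : (1:ℝ) ≤ u := by rw [huj]; linarith
        have hujs : u ≤ j - s := by rw [huj]; linarith
        have hjs : s ≤ j := by linarith
        have hu2 : u^2 ≤ t - 1 := by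
          have h4 : (j - s)^2 ≤ j^2 - s^2 := by nlinarith
          have h5 : u^2 ≤ (j - s)^2 := by nlinarith
          rw [ht, hjn]; nlinarith
        refine hv.trans (ENNReal.ofReal_le_ofReal ?_)
        have hd := diff_le_inv (by linarith : (0:ℝ) < u) hu2
        calc 2*(Real.sqrt (t+1) - Real.sqrt (t-1)) ≤ 2*(1/u) := by linarith
          _ = 2/u := by ring
      · have hn1 : 1 ≤ |n| := by
          have := abs_nonneg n; omega
        have hnk : |n| ≤ k - 1 := by omega
        have hk2 : 2 ≤ k := by omega
        have hsge : (2:ℝ) ≤ s := le_trans (by exact_mod_cast hk2) hks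
        have hC : 1 - C₀ = s^2 := by
          rcases le_or_gt (1 - C₀) 0 with h | h
          · exfalso
            have hz : s = 0 := by rw [hs]; exact Real.sqrt_eq_zero'.mpr (by linarith)
            linarith
          · rw [hs, Real.sq_sqrt h.le]
        have hTn : T n = ∅ := by
          rw [Set.eq_empty_iff_forall_notMem]
          intro x hx
          have hax := (abs_le.mp hx.1).2
          have hj1 : (1:ℝ) ≤ ((|n| : ℤ) : ℝ) := by exact_mod_cast hn1
          have hjk1 : ((|n| : ℤ) : ℝ) ≤ (k:ℝ) - 1 := by exact_mod_cast hnk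
          have hjs1 : ((|n| : ℤ) : ℝ) ≤ s - 1 := by linarith
          have hneg : (n:ℝ)^2 + C₀ + 1 < 0 := by
            rw [hjn]; nlinarith
          nlinarith [sq_nonneg x]
        simp only [hg]; rw [if_neg h1, if_neg h2, hTn]
        simp
  -- assemble
  have hsqrt2 : Real.sqrt 2 ≤ 1.5 := by
    nlinarith [Real.sq_sqrt (show (0:ℝ) ≤ 2 by norm_num), Real.sqrt_nonneg 2]
  have hfinal : ∑ n ∈ Finset.Icc (-M) M, g n ≤ 100 * Real.log N := by
    have hsym := sym_sum M g hg0 hge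
    have hpoint : ∀ n ∈ Finset.Icc (0:ℤ) M, g n ≤
        (if n ∈ ({0, k, k+1} : Finset ℤ) then 2*Real.sqrt 2 else 0) +
        (if k+2 ≤ n then 2/(((n-k-1:ℤ)):ℝ) else 0) := by
      intro n hn
      simp only [Finset.mem_Icc] at hn
      have habs : |n| = n := abs_of_nonneg hn.1
      have hmem : (n ∈ ({0, k, k+1} : Finset ℤ)) ↔ (n = 0 ∨ n = k ∨ n = k+1) := by
        simp [Finset.mem_insert]
      simp only [hg, habs]
      by_cases h1 : n = 0 ∨ n = k ∨ n = k+1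
      · rw [if_pos h1, if_pos (hmem.mpr h1), if_neg (show ¬ (k+2 ≤ n) by omega)]
        simp
      · rw [if_neg h1, if_neg (fun hc => h1 (hmem.mp hc))]
        by_cases h2 : k+2 ≤ n
        · rw [if_pos h2]; simp
        · rw [if_neg h2]; simp
    have hb1 : ∑ n ∈ Finset.Icc (0:ℤ) M,
        (if n ∈ ({0, k, k+1} : Finset ℤ) then 2*Real.sqrt 2 else 0) ≤ 3*(2*Real.sqrt 2) := by
      rw [← Finset.sum_filter]
      have hcard : ((Finset.Icc (0:ℤ) M).filter (· ∈ ({0,k,k+1}:Finset ℤ))).card ≤ 3 := by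
        refine le_trans (Finset.card_le_card (fun x hx => (Finset.mem_filter.mp hx).2)) ?_
        refine le_trans (Finset.card_insert_le _ _) ?_
        have h5 : ({k+1} : Finset ℤ).card = 1 := Finset.card_singleton _
        have h6 := Finset.card_insert_le k ({k+1} : Finset ℤ)
        omega
      rw [Finset.sum_const]
      have hpos : (0:ℝ) ≤ 2*Real.sqrt 2 := by positivity
      calc ((Finset.Icc (0:ℤ) M).filter (· ∈ ({0,k,k+1}:Finset ℤ))).card • (2*Real.sqrt 2)
          = (((Finset.Icc (0:ℤ) M).filter (· ∈ ({0,k,k+1}:Finset ℤ))).card : ℝ) * (2*Real.sqrt 2) :=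
            nsmul_eq_mul _ _
        _ ≤ 3 * (2*Real.sqrt 2) := by
            apply mul_le_mul_of_nonneg_right _ hpos
            exact_mod_cast hcard
    have hb2 : ∑ n ∈ Finset.Icc (0:ℤ) M,
        (if k+2 ≤ n then 2/(((n-k-1:ℤ)):ℝ) else 0) ≤ 2 + 2*Real.log N := by
      have hsub2 : Finset.Icc (k+2) M ⊆ Finset.Icc (0:ℤ) M :=
        Finset.Icc_subset_Icc_left (by omega)
      rw [← Finset.sum_subset hsub2 (by
        intro n hn hns
        simp only [Finset.mem_Icc] at hn hns
        rw [if_neg (by omega)])]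
      have heq : ∀ n ∈ Finset.Icc (k+2) M,
          (if k+2 ≤ n then (2:ℝ)/(((n-k-1:ℤ)):ℝ) else 0) = 2/(((n-k-1:ℤ)):ℝ) :=
        fun n hn => if_pos (Finset.mem_Icc.mp hn).1
      rw [Finset.sum_congr rfl heq]
      have hmap : Finset.Icc (k+2) M = Finset.map (addLeftEmbedding (k+1)) (Finset.Icc 1 (M-k-1)) := by
        rw [Finset.map_add_left_Icc]; congr 1 <;> ring
      rw [hmap, Finset.sum_map]
      have heq2 : ∀ m ∈ Finset.Icc (1:ℤ) (M-k-1),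
          (2:ℝ)/((((addLeftEmbedding (k+1)) m - k - 1 : ℤ)):ℝ) = 2/((m:ℝ)) := by
        intro m hm
        congr 1
        rw [addLeftEmbedding_apply]
        push_cast; ring
      rw [Finset.sum_congr rfl heq2]
      refine hsum (M-k-1) N ?_ (by linarith)
      have : ((M - k - 1 : ℤ) : ℝ) ≤ (M:ℝ) := by
        push_cast
        have : (0:ℝ) ≤ (k:ℝ) := by exact_mod_cast hk0
        linarith
      linarith
    have hsum0 : ∑ n ∈ Finset.Icc (0:ℤ) M, g n ≤ 3*(2*Real.sqrt 2) + (2 + 2*Real.log N) := by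
      calc ∑ n ∈ Finset.Icc (0:ℤ) M, g n ≤
          ∑ n ∈ Finset.Icc (0:ℤ) M,
            ((if n ∈ ({0, k, k+1} : Finset ℤ) then 2*Real.sqrt 2 else 0) +
             (if k+2 ≤ n then 2/(((n-k-1:ℤ)):ℝ) else 0)) := Finset.sum_le_sum hpoint
        _ = (∑ n ∈ Finset.Icc (0:ℤ) M, (if n ∈ ({0, k, k+1} : Finset ℤ) then 2*Real.sqrt 2 else 0))
            + ∑ n ∈ Finset.Icc (0:ℤ) M, (if k+2 ≤ n then 2/(((n-k-1:ℤ)):ℝ) else 0) :=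
            Finset.sum_add_distrib
        _ ≤ _ := add_le_add hb1 hb2
    calc ∑ n ∈ Finset.Icc (-M) M, g n ≤ 2 * ∑ n ∈ Finset.Icc (0:ℤ) M, g n := hsym
      _ ≤ 2 * (3*(2*Real.sqrt 2) + (2 + 2*Real.log N)) := by linarith
      _ ≤ 100 * Real.log N := by nlinarith
  calc measureRZ {w : ℝ × ℝ | |H w - C₀| ≤ 1 ∧ Real.sqrt (w.1 ^ 2 + w.2 ^ 2) ≤ N}
      = ∑' n : ℤ, volume (T n) := by
        rw [measureRZ]
        exact tsum_congr fun n => by rw [hslice n]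
    _ = ∑ n ∈ Finset.Icc (-M) M, volume (T n) := tsum_eq_sum (fun n hn => hvanish n hn)
    _ ≤ ∑ n ∈ Finset.Icc (-M) M, ENNReal.ofReal (g n) :=
        Finset.sum_le_sum (fun n _ => hbound n)
    _ = ENNReal.ofReal (∑ n ∈ Finset.Icc (-M) M, g n) :=
        (ENNReal.ofReal_sum_of_nonneg (fun n _ => hg0 n)).symm
    _ ≤ ENNReal.ofReal (100 * Real.log N) := ENNReal.ofReal_le_ofReal hfinal
end

section
/- There is an absolute constant C > 0 such that the following holds. Let N₁, N₂ be reals with N₂ ≥ 1 and N₁ ≥ 100 N₂, and let a = (a₁,a₂), b = (b₁,b₂) ∈ ℝ² satisfy |a₁| ≥ N₁/2, |a| ≤ 2N₁, and |b| ≤ 2N₂. Then the two-dimensional Lebesgue measure of the set E_{a,b} = {η ∈ ℝ² : |H(η) + H(a+b−η) − H(a) − H(b)| ≤ 1 and |η| ≤ 2N₂} is at most C N₂ / N₁. -/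
open MeasureTheory
open scoped ENNReal

lemma abs_le_sqrt_left (x y : ℝ) : |x| ≤ Real.sqrt (x ^ 2 + y ^ 2) := by
  rw [← Real.sqrt_sq_eq_abs]
  exact Real.sqrt_le_sqrt (by nlinarith [sq_nonneg y])

lemma abs_le_sqrt_right (x y : ℝ) : |y| ≤ Real.sqrt (x ^ 2 + y ^ 2) := by
  rw [← Real.sqrt_sq_eq_abs]
  exact Real.sqrt_le_sqrt (by nlinarith [sq_nonneg x])

lemma key_lemma (N₁ N₂ x x' a₁ b₁ c : ℝ) (hN₂ : 1 ≤ N₂) (hN₁ : 100 * N₂ ≤ N₁)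
    (ha : N₁ / 2 ≤ |a₁|) (hb : |b₁| ≤ 2 * N₂) (hx : |x| ≤ 2 * N₂) (hx' : |x'| ≤ 2 * N₂)
    (h1 : |2 * (x - a₁) * (x - b₁) - c| ≤ 1) (h2 : |2 * (x' - a₁) * (x' - b₁) - c| ≤ 1) :
    |x - x'| ≤ 3 / N₁ := by
  have hN₁pos : (0 : ℝ) < N₁ := by nlinarith
  obtain ⟨h1a, h1b⟩ := abs_le.mp h1
  obtain ⟨h2a, h2b⟩ := abs_le.mp h2
  obtain ⟨hba, hbb⟩ := abs_le.mp hb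
  obtain ⟨hxa, hxb⟩ := abs_le.mp hx
  obtain ⟨hxa', hxb'⟩ := abs_le.mp hx'
  rw [abs_le]
  have hcase : N₁ / 2 ≤ a₁ ∨ a₁ ≤ -(N₁ / 2) := by
    rcases le_or_gt 0 a₁ with h | h
    · left; rwa [abs_of_nonneg h] at ha
    · right; rw [abs_of_neg h] at ha; linarith
  have main : ∀ u v : ℝ, -(2 * N₂) ≤ u → u ≤ 2 * N₂ → -(2 * N₂) ≤ v → v ≤ 2 * N₂ →
      -1 ≤ 2 * (u - a₁) * (u - b₁) - c → 2 * (u - a₁) * (u - b₁) - c ≤ 1 →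
      -1 ≤ 2 * (v - a₁) * (v - b₁) - c → 2 * (v - a₁) * (v - b₁) - c ≤ 1 →
      (u - v) * N₁ ≤ 3 := by
    intro u v hua hub hva hvb g1a g1b g2a g2b
    rcases le_or_gt (u - v) 0 with hd | hd
    · nlinarith
    · rcases hcase with hA | hA
      · nlinarith [mul_pos hd (show (0:ℝ) < a₁ + b₁ - u - v - 44 / 100 * N₁ by nlinarith)]
      · nlinarith [mul_pos hd (show (0:ℝ) < u + v - a₁ - b₁ - 44 / 100 * N₁ by nlinarith)]
  constructor
  · rw [neg_le, neg_sub, le_div_iff₀ hN₁pos]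
    exact main x' x hxa' hxb' hxa hxb h2a h2b h1a h1b
  · rw [le_div_iff₀ hN₁pos]
    exact main x x' hxa hxb hxa' hxb' h1a h1b h2a h2b

/-- There is an absolute constant `C > 0` such that the following holds. Let `N₁, N₂` be
reals with `N₂ ≥ 1` and `N₁ ≥ 100 N₂`, and let `a, b ∈ ℝ²` satisfy `|a₁| ≥ N₁/2`,
`|a| ≤ 2N₁` and `|b| ≤ 2N₂`. Then the two-dimensional Lebesgue measure of the set
`E_{a,b} = {η ∈ ℝ² : |H(η) + H(a+b−η) − H(a) − H(b)| ≤ 1 and |η| ≤ 2N₂}` is at most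
`C N₂ / N₁`. -/
theorem stmt_14 :
    ∃ C : ℝ, 0 < C ∧ ∀ (N₁ N₂ : ℝ), 1 ≤ N₂ → 100 * N₂ ≤ N₁ →
      ∀ a b : ℝ × ℝ, N₁ / 2 ≤ |a.1| → Real.sqrt (a.1 ^ 2 + a.2 ^ 2) ≤ 2 * N₁ →
        Real.sqrt (b.1 ^ 2 + b.2 ^ 2) ≤ 2 * N₂ →
        volume {η : ℝ × ℝ | |H η + H (a + b - η) - H a - H b| ≤ 1 ∧
            Real.sqrt (η.1 ^ 2 + η.2 ^ 2) ≤ 2 * N₂}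
          ≤ ENNReal.ofReal (C * N₂ / N₁) := by
  refine ⟨24, by norm_num, ?_⟩
  intro N₁ N₂ hN₂ hN₁ a b ha1 _ hb
  have hN₁pos : (0 : ℝ) < N₁ := by nlinarith
  have hN₂pos : (0 : ℝ) < N₂ := by linarith
  have hb1 : |b.1| ≤ 2 * N₂ := le_trans (abs_le_sqrt_left _ _) hb
  set s : Set (ℝ × ℝ) := {η : ℝ × ℝ | |H η + H (a + b - η) - H a - H b| ≤ 1 ∧
      Real.sqrt (η.1 ^ 2 + η.2 ^ 2) ≤ 2 * N₂} with hs_def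
  have hH : Continuous H := by unfold H; fun_prop
  have hc1 : Continuous fun η : ℝ × ℝ => |H η + H (a + b - η) - H a - H b| :=
    (((hH.add (hH.comp (continuous_const.sub continuous_id))).sub
      continuous_const).sub continuous_const).abs
  have hc2 : Continuous fun η : ℝ × ℝ => Real.sqrt (η.1 ^ 2 + η.2 ^ 2) := by fun_prop
  have hmeas : MeasurableSet s := by
    apply IsClosed.measurableSet
    exact (isClosed_le hc1 continuous_const).inter (isClosed_le hc2 continuous_const)
  -- slice bound
  have hslice : ∀ y : ℝ, volume ((fun x => (x, y)) ⁻¹' s) ≤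
      Set.indicator (Set.Icc (-(2 * N₂)) (2 * N₂)) (fun _ => ENNReal.ofReal (6 / N₁)) y := by
    intro y
    rcases Set.eq_empty_or_nonempty ((fun x => (x, y)) ⁻¹' s) with hE | ⟨x₀, hx₀⟩
    · rw [hE]
      simp
    · have hx₀' := hx₀
      obtain ⟨hx₀1, hx₀2⟩ := hx₀'
      have hy : |y| ≤ 2 * N₂ := le_trans (abs_le_sqrt_right x₀ y) hx₀2
      have hyI : y ∈ Set.Icc (-(2 * N₂)) (2 * N₂) := by
        rw [Set.mem_Icc]; constructor <;> [linarith [neg_abs_le y]; linarith [le_abs_self y]]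
      rw [Set.indicator_of_mem hyI]
      -- slice is contained in a ball of radius 3/N₁ around x₀
      have hsub : ((fun x => (x, y)) ⁻¹' s) ⊆ Metric.closedBall x₀ (3 / N₁) := by
        intro x hx
        obtain ⟨hx1, hx2⟩ := hx
        rw [Metric.mem_closedBall, Real.dist_eq]
        have hconv : ∀ z : ℝ, H (z, y) + H (a + b - (z, y)) - H a - H b =
            2 * (z - a.1) * (z - b.1) - (2 * (y - a.2) * (y - b.2)) := by
          intro z
          simp only [H, Prod.fst_sub, Prod.snd_sub, Prod.fst_add, Prod.snd_add]
          ring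
        rw [hconv x] at hx1
        rw [hconv x₀] at hx₀1
        exact key_lemma N₁ N₂ x x₀ a.1 b.1 (2 * (y - a.2) * (y - b.2)) hN₂ hN₁ ha1 hb1
          (le_trans (abs_le_sqrt_left x y) hx2) (le_trans (abs_le_sqrt_left x₀ y) hx₀2)
          hx1 hx₀1
      calc volume ((fun x => (x, y)) ⁻¹' s) ≤ volume (Metric.closedBall x₀ (3 / N₁)) :=
            measure_mono hsub
        _ = ENNReal.ofReal (2 * (3 / N₁)) := Real.volume_closedBall _ _
        _ = ENNReal.ofReal (6 / N₁) := by rw [show 2 * (3 / N₁) = 6 / N₁ by ring]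
  calc volume s = ∫⁻ y, volume ((fun x => (x, y)) ⁻¹' s) := by
        rw [← (Measure.prod_apply_symm (μ := (volume : Measure ℝ)) (ν := (volume : Measure ℝ))
          hmeas), ← Measure.volume_eq_prod]
    _ ≤ ∫⁻ y, Set.indicator (Set.Icc (-(2 * N₂)) (2 * N₂))
          (fun _ => ENNReal.ofReal (6 / N₁)) y := lintegral_mono hslice
    _ = ENNReal.ofReal (6 / N₁) * volume (Set.Icc (-(2 * N₂)) (2 * N₂)) := by
        rw [lintegral_indicator measurableSet_Icc]
        simp [mul_comm]
    _ ≤ ENNReal.ofReal (24 * N₂ / N₁) := by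
        rw [Real.volume_Icc, ← ENNReal.ofReal_mul (by positivity)]
        exact le_of_eq (by rw [show 6 / N₁ * (2 * N₂ - -(2 * N₂)) = 24 * N₂ / N₁ by
          field_simp; ring])
end

section
/- Let N₁, N₂ be reals with N₂ ≥ 1 and N₁ ≥ 100 N₂, and let a = (a₁,a₂), b = (b₁,b₂) ∈ ℝ² satisfy |a₁| ≥ N₁/2, |a| ≤ 2N₁, and |b| ≤ 2N₂. If η = (η₁,η₂) and η' = (η₁',η₂') both lie in the set E_{a,b} = {η ∈ ℝ² : |H(η) + H(a+b−η) − H(a) − H(b)| ≤ 1 and |η| ≤ 2N₂} and η₂ = η₂', then |η₁ − η₁'| ≤ 8/N₁. -/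
open MeasureTheory

lemma comp_abs_le (x y C : ℝ) (h : Real.sqrt (x ^ 2 + y ^ 2) ≤ C) : |x| ≤ C := by
  have : |x| = Real.sqrt (x ^ 2) := (Real.sqrt_sq_eq_abs x).symm
  rw [this]
  exact le_trans (Real.sqrt_le_sqrt (by nlinarith)) h

/-- Let `N₁, N₂` be reals with `N₂ ≥ 1` and `N₁ ≥ 100 N₂`, and let `a, b ∈ ℝ²` satisfy
`|a₁| ≥ N₁/2`, `|a| ≤ 2N₁` and `|b| ≤ 2N₂`. If `η` and `η'` both lie in
`E_{a,b} = {η ∈ ℝ² : |H(η) + H(a+b−η) − H(a) − H(b)| ≤ 1 and |η| ≤ 2N₂}` and `η₂ = η₂'`,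
then `|η₁ − η₁'| ≤ 8/N₁`. -/
theorem stmt_15 (N₁ N₂ : ℝ) (hN₂ : 1 ≤ N₂) (hN₁ : 100 * N₂ ≤ N₁)
    (a b : ℝ × ℝ) (ha1 : N₁ / 2 ≤ |a.1|) (ha : Real.sqrt (a.1 ^ 2 + a.2 ^ 2) ≤ 2 * N₁)
    (hb : Real.sqrt (b.1 ^ 2 + b.2 ^ 2) ≤ 2 * N₂)
    (η η' : ℝ × ℝ)
    (hη : |H η + H (a + b - η) - H a - H b| ≤ 1 ∧ Real.sqrt (η.1 ^ 2 + η.2 ^ 2) ≤ 2 * N₂)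
    (hη' : |H η' + H (a + b - η') - H a - H b| ≤ 1 ∧
      Real.sqrt (η'.1 ^ 2 + η'.2 ^ 2) ≤ 2 * N₂)
    (h2 : η.2 = η'.2) :
    |η.1 - η'.1| ≤ 8 / N₁ := by
  have hb1 : |b.1| ≤ 2 * N₂ := comp_abs_le _ _ _ hb
  have hη1 : |η.1| ≤ 2 * N₂ := comp_abs_le _ _ _ hη.2
  have hη'1 : |η'.1| ≤ 2 * N₂ := comp_abs_le _ _ _ hη'.2
  have hN₁pos : 0 < N₁ := by linarith
  set d := η.1 - η'.1 with hd
  set T := η.1 + η'.1 - (a.1 + b.1) with hT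
  have key : |2 * (d * T)| ≤ 2 := by
    have h1 := hη.1
    have h2' := hη'.1
    have hid : 2 * (d * T) =
        (H η + H (a + b - η) - H a - H b) - (H η' + H (a + b - η') - H a - H b) := by
      simp only [H, Prod.fst_add, Prod.snd_add, Prod.fst_sub, Prod.snd_sub, hd, hT, h2]
      ring
    rw [hid]
    calc |(H η + H (a + b - η) - H a - H b) - (H η' + H (a + b - η') - H a - H b)|
        ≤ |H η + H (a + b - η) - H a - H b| + |H η' + H (a + b - η') - H a - H b| :=
          abs_sub _ _
      _ ≤ 2 := by linarith
  have hdT : |d| * |T| ≤ 1 := by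
    rw [abs_mul] at key
    have : |(2:ℝ)| = 2 := by norm_num
    rw [abs_mul, this] at key
    linarith
  have hTlow : N₁ / 4 ≤ |T| := by
    have : |a.1| ≤ |T| + |η.1| + |η'.1| + |b.1| := by
      have := abs_sub_abs_le_abs_sub a.1 (η.1 + η'.1 - b.1 - T)
      rw [hT]
      cases abs_cases T with
      | inl h => cases abs_cases (a.1) with
        | inl h' =>
          cases abs_cases η.1 with
          | inl h1 => cases abs_cases η'.1 with
            | inl h2 => cases abs_cases b.1 with
              | inl h3 => linarith
              | inr h3 => linarith
            | inr h2 => cases abs_cases b.1 with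
              | inl h3 => linarith
              | inr h3 => linarith
          | inr h1 => cases abs_cases η'.1 with
            | inl h2 => cases abs_cases b.1 with
              | inl h3 => linarith
              | inr h3 => linarith
            | inr h2 => cases abs_cases b.1 with
              | inl h3 => linarith
              | inr h3 => linarith
        | inr h' =>
          cases abs_cases η.1 with
          | inl h1 => cases abs_cases η'.1 with
            | inl h2 => cases abs_cases b.1 with
              | inl h3 => linarith
              | inr h3 => linarith
            | inr h2 => cases abs_cases b.1 with
              | inl h3 => linarith
              | inr h3 => linarith
          | inr h1 => cases abs_cases η'.1 with
            | inl h2 => cases abs_cases b.1 with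
              | inl h3 => linarith
              | inr h3 => linarith
            | inr h2 => cases abs_cases b.1 with
              | inl h3 => linarith
              | inr h3 => linarith
      | inr h => cases abs_cases (a.1) with
        | inl h' =>
          cases abs_cases η.1 with
          | inl h1 => cases abs_cases η'.1 with
            | inl h2 => cases abs_cases b.1 with
              | inl h3 => linarith
              | inr h3 => linarith
            | inr h2 => cases abs_cases b.1 with
              | inl h3 => linarith
              | inr h3 => linarith
          | inr h1 => cases abs_cases η'.1 with
            | inl h2 => cases abs_cases b.1 with
              | inl h3 => linarith
              | inr h3 => linarith
            | inr h2 => cases abs_cases b.1 with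
              | inl h3 => linarith
              | inr h3 => linarith
        | inr h' =>
          cases abs_cases η.1 with
          | inl h1 => cases abs_cases η'.1 with
            | inl h2 => cases abs_cases b.1 with
              | inl h3 => linarith
              | inr h3 => linarith
            | inr h2 => cases abs_cases b.1 with
              | inl h3 => linarith
              | inr h3 => linarith
          | inr h1 => cases abs_cases η'.1 with
            | inl h2 => cases abs_cases b.1 with
              | inl h3 => linarith
              | inr h3 => linarith
            | inr h2 => cases abs_cases b.1 with
              | inl h3 => linarith
              | inr h3 => linarith
    linarith
  have hdle : |d| ≤ 4 / N₁ := by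
    have hTpos : 0 < |T| := by linarith [hTlow]
    rw [le_div_iff₀ hN₁pos]
    nlinarith [abs_nonneg d, abs_nonneg T]
  have : (4:ℝ) / N₁ ≤ 8 / N₁ := by gcongr <;> norm_num
  linarith
end

section
/- There is an absolute constant C > 0 such that the following holds. Let λ ≥ 1 be real, let N₁, N₂ be reals with N₂ ≥ 1 and N₁ ≥ 100 N₂, and let a, b ∈ ℝ × (1/λ)ℤ satisfy N₁ ≤ |a| ≤ 2N₁ and |b| ≤ 2N₂. Then the set E_{a,b} = {η ∈ ℝ² : |H(η) + H(a+b−η) − H(a) − H(b)| ≤ 1 and |η| ≤ 2N₂} satisfies |E_{a,b}|_{ℝ×ℤ_{1/λ}} ≤ C (1/λ + N₂/N₁). -/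
open MeasureTheory
open scoped ENNReal

/-- The `ℝ×ℤ_{1/λ}` measure of a set `E ⊆ ℝ²`:
`|E|_{ℝ×ℤ_{1/λ}} = (1/λ) ∑_{n∈ℤ}` (Lebesgue measure of `{x ∈ ℝ : (x, n/λ) ∈ E}`). -/
noncomputable def measureRZlam (lam : ℝ) (E : Set (ℝ × ℝ)) : ℝ≥0∞ :=
  ENNReal.ofReal (1 / lam) * ∑' n : ℤ, volume {x : ℝ | (x, (n : ℝ) / lam) ∈ E}

lemma vol_le_of_diam (S : Set ℝ) (d : ℝ)
    (h : ∀ x ∈ S, ∀ y ∈ S, |x - y| ≤ d) : volume S ≤ ENNReal.ofReal (2 * d) := by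
  rcases S.eq_empty_or_nonempty with rfl | ⟨x₀, hx₀⟩
  · simp
  · have hsub : S ⊆ Set.Icc (x₀ - d) (x₀ + d) := by
      intro y hy
      have := h x₀ hx₀ y hy
      rw [abs_le] at this
      constructor <;> linarith [this.1, this.2]
    calc volume S ≤ volume (Set.Icc (x₀ - d) (x₀ + d)) := measure_mono hsub
      _ = ENNReal.ofReal ((x₀ + d) - (x₀ - d)) := Real.volume_Icc
      _ = ENNReal.ofReal (2 * d) := by ring_nf

lemma card_le_of_pairwise_bdd (F : Finset ℤ) (B : ℝ) (hB : 0 ≤ B)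
    (h : ∀ m ∈ F, ∀ n ∈ F, |(m : ℝ) - n| ≤ B) : (F.card : ℝ) ≤ B + 1 := by
  rcases F.eq_empty_or_nonempty with rfl | hne
  · simp; linarith
  · set n₀ := F.min' hne with hn₀
    have hmem : n₀ ∈ F := F.min'_mem hne
    have hsub : F ⊆ Finset.Icc n₀ (n₀ + ⌊B⌋) := by
      intro n hn
      rw [Finset.mem_Icc]
      refine ⟨F.min'_le n hn, ?_⟩
      have h1 : |(n : ℝ) - n₀| ≤ B := h n hn n₀ hmem
      have h2 : (n : ℝ) - n₀ ≤ B := (abs_le.mp h1).2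
      have : ((n - n₀ : ℤ) : ℝ) ≤ B := by push_cast; linarith
      have := Int.le_floor.mpr this
      omega
    have hcard : F.card ≤ (Finset.Icc n₀ (n₀ + ⌊B⌋)).card := Finset.card_le_card hsub
    have hicc : (Finset.Icc n₀ (n₀ + ⌊B⌋)).card = (⌊B⌋ + 1).toNat := by
      rw [Int.card_Icc]; congr 1; ring
    have hfl : (0:ℤ) ≤ ⌊B⌋ := Int.floor_nonneg.mpr hB
    have hcard2 : (F.card : ℝ) ≤ ((⌊B⌋ + 1).toNat : ℝ) := by
      exact_mod_cast hicc ▸ hcard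
    have hc3 : (((⌊B⌋ + 1).toNat : ℤ) : ℝ) = ((⌊B⌋ : ℝ) + 1) := by
      rw [Int.toNat_of_nonneg (by omega)]; push_cast; ring
    have hfl2 : (⌊B⌋ : ℝ) ≤ B := Int.floor_le B
    calc (F.card : ℝ) ≤ ((⌊B⌋ + 1).toNat : ℝ) := hcard2
      _ = (⌊B⌋ : ℝ) + 1 := by exact_mod_cast hc3
      _ ≤ B + 1 := by linarith

lemma sum_inv_sqrt_le (δ : ℝ) (hδ : 0 < δ) (F : Finset ℤ) :
    ∀ (c : ℤ → ℝ) (M : ℝ), 0 ≤ M →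
    (∀ n ∈ F, 1 ≤ c n ∧ c n ≤ M) →
    (∀ m ∈ F, ∀ n ∈ F, m ≠ n → δ ≤ |c m - c n|) →
    ∑ n ∈ F, 1 / Real.sqrt (c n) ≤ 1 + 2 / δ * Real.sqrt M := by
  induction F using Finset.strongInduction with
  | _ F ih =>
    intro c M hM hbd hsep
    rcases F.eq_empty_or_nonempty with rfl | hne
    · simp; positivity
    · obtain ⟨N, hN, hmax⟩ := F.exists_max_image c hne
      have hcN : 1 ≤ c N := (hbd N hN).1
      have hsN : 1 ≤ Real.sqrt (c N) := by
        rw [show (1:ℝ) = Real.sqrt 1 by simp]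
        exact Real.sqrt_le_sqrt hcN
      have hsum : ∑ n ∈ F, 1 / Real.sqrt (c n)
          = 1 / Real.sqrt (c N) + ∑ n ∈ F.erase N, 1 / Real.sqrt (c n) := by
        rw [← Finset.add_sum_erase _ _ hN]
      rcases (F.erase N).eq_empty_or_nonempty with he | ⟨n', hn'⟩
      · rw [hsum, he]
        simp only [Finset.sum_empty, add_zero]
        have h1 : 1 / Real.sqrt (c N) ≤ 1 := by
          rw [div_le_one (by linarith)]; linarith
        have : 0 ≤ 2 / δ * Real.sqrt M := by positivity
        linarith
      · have hsub : F.erase N ⊂ F := Finset.erase_ssubset hN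
        have hub : ∀ n ∈ F.erase N, c n ≤ c N - δ := by
          intro n hn
          have hnF := Finset.mem_of_mem_erase hn
          have hne' : n ≠ N := Finset.ne_of_mem_erase hn
          have h1 := hsep n hnF N hN hne'
          have h2 := hmax n hnF
          rw [abs_sub_comm, abs_of_nonneg (by linarith)] at h1
          linarith
        have hM' : (1:ℝ) ≤ c N - δ := le_trans (hbd n' (Finset.mem_of_mem_erase hn')).1 (hub n' hn')
        have hrec := ih (F.erase N) hsub c (c N - δ) (by linarith)
          (fun n hn => ⟨(hbd n (Finset.mem_of_mem_erase hn)).1, hub n hn⟩)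
          (fun m hm n hn hmn => hsep m (Finset.mem_of_mem_erase hm) n (Finset.mem_of_mem_erase hn) hmn)
        have hkey : 1 / Real.sqrt (c N) + 2 / δ * Real.sqrt (c N - δ) ≤ 2 / δ * Real.sqrt (c N) := by
          have h0 : (0:ℝ) ≤ c N - δ := by linarith
          have hprod : (Real.sqrt (c N) - Real.sqrt (c N - δ)) * (Real.sqrt (c N) + Real.sqrt (c N - δ)) = δ := by
            have e1 : Real.sqrt (c N) ^ 2 = c N := Real.sq_sqrt (by linarith)
            have e2 : Real.sqrt (c N - δ) ^ 2 = c N - δ := Real.sq_sqrt h0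
            nlinarith [e1, e2]
          have hle : Real.sqrt (c N - δ) ≤ Real.sqrt (c N) := Real.sqrt_le_sqrt (by linarith)
          have hpos : 0 < Real.sqrt (c N) := by linarith
          have hgap : δ / (2 * Real.sqrt (c N)) ≤ Real.sqrt (c N) - Real.sqrt (c N - δ) := by
            rw [div_le_iff₀ (by positivity)]
            nlinarith [Real.sqrt_nonneg (c N - δ)]
          have h2 : 1 / Real.sqrt (c N) ≤ 2 / δ * (Real.sqrt (c N) - Real.sqrt (c N - δ)) := by
            rw [div_le_iff₀ hpos]
            have hmul := mul_le_mul_of_nonneg_left hgap (le_of_lt (by positivity : (0:ℝ) < 2/δ))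
            calc (1:ℝ) = 2 / δ * (δ / 2) := by field_simp
              _ = 2 / δ * (δ / (2 * Real.sqrt (c N))) * Real.sqrt (c N) := by
                  field_simp
              _ ≤ 2 / δ * (Real.sqrt (c N) - Real.sqrt (c N - δ)) * Real.sqrt (c N) := by
                  apply mul_le_mul_of_nonneg_right _ (le_of_lt hpos)
                  exact hmul
          linarith
        have hMle : Real.sqrt (c N) ≤ Real.sqrt M := Real.sqrt_le_sqrt (hbd N hN).2
        rw [hsum]
        have : 2 / δ * Real.sqrt (c N) ≤ 2 / δ * Real.sqrt M :=
          mul_le_mul_of_nonneg_left hMle (by positivity)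
        linarith

lemma abs_comb (N₁ N₂ c u v d : ℝ) (hN : 100 * N₂ ≤ N₁) (hN₂ : 0 ≤ N₂)
    (hc : (7/10) * N₁ ≤ |c|) (hu : |u| ≤ 2*N₂) (hv : |v| ≤ 2*N₂) (hd : |d| ≤ 2*N₂) :
    N₁/2 ≤ |u + v - c - d| := by
  have h1 : |u + v - d| ≤ 6 * N₂ := by
    calc |u + v - d| ≤ |u + v| + |d| := abs_sub _ _
      _ ≤ |u| + |v| + |d| := by linarith [abs_add_le u v]
      _ ≤ 6 * N₂ := by linarith
  have h2 : |c| - |u + v - d| ≤ |c - (u + v - d)| := abs_sub_abs_le_abs_sub _ _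
  have h3 : |c - (u + v - d)| = |u + v - c - d| := by
    rw [show c - (u + v - d) = -(u + v - c - d) by ring, abs_neg]
  rw [h3] at h2
  linarith

lemma sum_vol_le (F : Finset ℤ) (v : ℤ → ℝ≥0∞) (s B : ℝ) (hs : 0 ≤ s) (hB : 0 ≤ B)
    (hv : ∀ n ∈ F, v n ≤ ENNReal.ofReal s) (hcard : (F.card : ℝ) ≤ B) :
    ∑ n ∈ F, v n ≤ ENNReal.ofReal (B * s) := by
  calc ∑ n ∈ F, v n ≤ ∑ _n ∈ F, ENNReal.ofReal s := Finset.sum_le_sum hv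
    _ = F.card * ENNReal.ofReal s := by rw [Finset.sum_const, nsmul_eq_mul]
    _ ≤ ENNReal.ofReal B * ENNReal.ofReal s := by
        apply mul_le_mul_left
        rw [← ENNReal.ofReal_natCast]
        exact ENNReal.ofReal_le_ofReal hcard
    _ = ENNReal.ofReal (B * s) := (ENNReal.ofReal_mul hB).symm

lemma numer (lam N₁ N₂ u v : ℝ) (hlam : 1 ≤ lam) (hN₂ : 1 ≤ N₂) (hN₁0 : 0 < N₁)
    (hu : u ≤ 900) (hv : v ≤ 900*N₂) :
    u/lam + v/N₁ ≤ 1000*(1/lam + N₂/N₁) := by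
  have hlam0 : 0 < lam := by linarith
  have h1 : u/lam ≤ 900/lam := by gcongr
  have h2 : v/N₁ ≤ (900*N₂)/N₁ := by gcongr
  have h3 : (0:ℝ) ≤ 1/lam := by positivity
  have h4 : (0:ℝ) ≤ N₂/N₁ := by positivity
  have e1 : (900:ℝ)/lam = 900*(1/lam) := by ring
  have e2 : (900*N₂)/N₁ = 900*(N₂/N₁) := by ring
  linarith [h1, h2]

set_option maxHeartbeats 3000000 in
lemma main_core (lam N₁ N₂ a₁ A2 b₁ B2 : ℝ) (hlam : 1 ≤ lam) (hN₂ : 1 ≤ N₂)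
    (hN12 : 100 * N₂ ≤ N₁) (haN : N₁^2 ≤ a₁^2 + A2^2)
    (hb₁ : |b₁| ≤ 2*N₂) (hB2 : |B2| ≤ 2*N₂) (S : ℤ → Set ℝ)
    (hmem : ∀ n : ℤ, ∀ x ∈ S n,
      |(x - a₁)*(x - b₁) - ((n:ℝ)/lam - A2)*((n:ℝ)/lam - B2)| ≤ 1/2 ∧
      |x| ≤ 2*N₂ ∧ |(n:ℝ)/lam| ≤ 2*N₂) :
    ENNReal.ofReal (1/lam) * ∑' n : ℤ, volume (S n)
      ≤ ENNReal.ofReal (1000 * (1/lam + N₂/N₁)) := by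
  classical
  have hlam0 : 0 < lam := by linarith
  have hN₂0 : 0 < N₂ := by linarith
  have hN₁0 : 0 < N₁ := by linarith
  have hN₁100 : 100 ≤ N₁ := by linarith
  set P : Finset ℤ := (Finset.Icc (-(⌊2*lam*N₂⌋)) ⌊2*lam*N₂⌋).filter
    (fun n => (S n).Nonempty) with hPdef
  have hP0 : ∀ n ∉ P, volume (S n) = 0 := by
    intro n hn
    rcases (S n).eq_empty_or_nonempty with he | hne
    · simp [he]
    · exfalso
      apply hn
      rw [hPdef, Finset.mem_filter]
      refine ⟨?_, hne⟩
      obtain ⟨x, hx⟩ := hne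
      have h3 := (hmem n x hx).2.2
      rw [abs_div, abs_of_pos hlam0, div_le_iff₀ hlam0] at h3
      rw [Finset.mem_Icc]
      have hna := neg_le_abs (n:ℝ)
      have hpa := le_abs_self (n:ℝ)
      constructor
      · rw [neg_le]
        apply Int.le_floor.mpr
        push_cast
        linarith
      · apply Int.le_floor.mpr
        linarith
  have htsum : ∑' n : ℤ, volume (S n) = ∑ n ∈ P, volume (S n) := tsum_eq_sum hP0
  have hPne : ∀ n ∈ P, (S n).Nonempty := fun n hn => (Finset.mem_filter.mp hn).2
  suffices h : ∃ R : ℝ, 0 ≤ R ∧ (∑ n ∈ P, volume (S n)) ≤ ENNReal.ofReal R ∧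
      1/lam * R ≤ 1000 * (1/lam + N₂/N₁) by
    obtain ⟨R, hR0, hRsum, hRfin⟩ := h
    rw [htsum]
    calc ENNReal.ofReal (1/lam) * ∑ n ∈ P, volume (S n)
        ≤ ENNReal.ofReal (1/lam) * ENNReal.ofReal R := mul_le_mul_right hRsum _
      _ = ENNReal.ofReal (1/lam * R) := (ENNReal.ofReal_mul (by positivity)).symm
      _ ≤ ENNReal.ofReal (1000 * (1/lam + N₂/N₁)) := ENNReal.ofReal_le_ofReal hRfin
  -- notation
  obtain ⟨m, hmdef⟩ : ∃ m' : ℝ, m' = (a₁ + b₁)/2 := ⟨_, rfl⟩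
  obtain ⟨c, hcdef⟩ : ∃ c' : ℤ → ℝ,
      c' = fun n : ℤ => ((n:ℝ)/lam - A2)*((n:ℝ)/lam - B2) + m^2 - a₁*b₁ := ⟨_, rfl⟩
  have hFx : ∀ (x : ℝ) (n : ℤ),
      (x - a₁)*(x - b₁) - ((n:ℝ)/lam - A2)*((n:ℝ)/lam - B2) = (x - m)^2 - c n := by
    intro x n; simp only [hcdef]; rw [hmdef]; ring
  have hcaseSplit : N₁^2/2 ≤ a₁^2 ∨ N₁^2/2 ≤ A2^2 := by
    by_contra hcon
    push_neg at hcon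
    nlinarith [hcon.1, hcon.2]
  rcases hcaseSplit with hbig | hbig
  · -- Case A : a₁ is large
    have ha₁7 : (7/10)*N₁ ≤ |a₁| := by nlinarith [sq_abs a₁, abs_nonneg a₁]
    have hslice : ∀ n ∈ P, volume (S n) ≤ ENNReal.ofReal (2 * (2/N₁)) := by
      intro n hn
      apply vol_le_of_diam
      intro x hx z hz
      obtain ⟨h1x, h2x, _⟩ := hmem n x hx
      obtain ⟨h1z, h2z, _⟩ := hmem n z hz
      have hdiff : |(x - a₁)*(x - b₁) - (z - a₁)*(z - b₁)| ≤ 1 := by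
        rw [abs_le] at h1x h1z ⊢
        constructor <;> linarith [h1x.1, h1x.2, h1z.1, h1z.2]
      rw [show (x - a₁)*(x - b₁) - (z - a₁)*(z - b₁) = (x - z)*(x + z - a₁ - b₁) by ring,
        abs_mul] at hdiff
      have hge : N₁/2 ≤ |x + z - a₁ - b₁| :=
        abs_comb N₁ N₂ a₁ x z b₁ hN12 (le_of_lt hN₂0) ha₁7 h2x h2z hb₁
      have hmul : |x - z| * (N₁/2) ≤ 1 := by
        calc |x - z| * (N₁/2) ≤ |x - z| * |x + z - a₁ - b₁| :=
              mul_le_mul_of_nonneg_left hge (abs_nonneg _)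
          _ ≤ 1 := hdiff
      rw [le_div_iff₀ hN₁0]
      linarith
    have hcard : (P.card : ℝ) ≤ 4*lam*N₂ + 1 := by
      have h1 : P.card ≤ (Finset.Icc (-(⌊2*lam*N₂⌋)) ⌊2*lam*N₂⌋).card :=
        Finset.card_le_card (by rw [hPdef]; exact Finset.filter_subset _ _)
      have h2 : (Finset.Icc (-(⌊2*lam*N₂⌋)) ⌊2*lam*N₂⌋).card = (2*⌊2*lam*N₂⌋ + 1).toNat := by
        rw [Int.card_Icc]; congr 1; ring
      have hfl0 : (0:ℤ) ≤ ⌊2*lam*N₂⌋ := Int.floor_nonneg.mpr (by positivity)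
      have hfl : (⌊2*lam*N₂⌋ : ℝ) ≤ 2*lam*N₂ := Int.floor_le _
      have h3 : (((2*⌊2*lam*N₂⌋ + 1).toNat : ℤ) : ℝ) = 2*(⌊2*lam*N₂⌋:ℝ) + 1 := by
        rw [Int.toNat_of_nonneg (by omega)]; push_cast; ring
      calc (P.card:ℝ) ≤ ((2*⌊2*lam*N₂⌋ + 1).toNat : ℝ) := by exact_mod_cast h2 ▸ h1
        _ = 2*(⌊2*lam*N₂⌋:ℝ) + 1 := by exact_mod_cast h3
        _ ≤ 4*lam*N₂ + 1 := by linarith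
    refine ⟨(4*lam*N₂+1) * (2*(2/N₁)), by positivity,
      sum_vol_le P _ _ _ (by positivity) (by positivity) hslice hcard, ?_⟩
    have key : 1/lam * ((4*lam*N₂+1) * (2*(2/N₁))) = (4/N₁)/lam + (16*N₂)/N₁ := by
      field_simp; try ring
    rw [key]
    apply numer lam N₁ N₂ _ _ hlam hN₂ hN₁0
    · rw [div_le_iff₀ hN₁0]; nlinarith
    · nlinarith
  · -- Case B : A2 is large
    have hA27 : (7/10)*N₁ ≤ |A2| := by nlinarith [sq_abs A2, abs_nonneg A2]
    have hsepP : ∀ n ∈ P, ∀ n' ∈ P, N₁/(2*lam) * |(n:ℝ) - (n':ℝ)| ≤ |c n - c n'| := by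
      intro n hn n' hn'
      obtain ⟨x, hxS⟩ := hPne n hn
      have hyn := (hmem n x hxS).2.2
      obtain ⟨x', hxS'⟩ := hPne n' hn'
      have hyn' := (hmem n' x' hxS').2.2
      have hcc : c n - c n' = (((n:ℝ) - (n':ℝ))/lam) * ((n:ℝ)/lam + (n':ℝ)/lam - A2 - B2) := by
        simp only [hcdef]; field_simp; try ring
      rw [hcc, abs_mul, abs_div, abs_of_pos hlam0]
      have h2 : N₁/2 ≤ |(n:ℝ)/lam + (n':ℝ)/lam - A2 - B2| :=
        abs_comb N₁ N₂ A2 _ _ B2 hN12 (le_of_lt hN₂0) hA27 hyn hyn' hB2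
      calc N₁/(2*lam) * |(n:ℝ) - (n':ℝ)| = (|(n:ℝ) - (n':ℝ)|/lam) * (N₁/2) := by ring
        _ ≤ (|(n:ℝ) - (n':ℝ)|/lam) * |(n:ℝ)/lam + (n':ℝ)/lam - A2 - B2| :=
            mul_le_mul_of_nonneg_left h2 (by positivity)
        _ = |(n:ℝ) - (n':ℝ)|/lam * |(n:ℝ)/lam + (n':ℝ)/lam - A2 - B2| := by ring
    have hfeas : ∀ n ∈ P, ∃ x, x ∈ S n ∧ |x| ≤ 2*N₂ ∧ |(x - m)^2 - c n| ≤ 1/2 := by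
      intro n hn
      obtain ⟨x, hxS⟩ := hPne n hn
      obtain ⟨h1, h2, _⟩ := hmem n x hxS
      exact ⟨x, hxS, h2, by rw [← hFx]; exact h1⟩
    have hsliceGen : ∀ n ∈ P, ∀ x ∈ S n, |(x - m)^2 - c n| ≤ 1/2 ∧ |x| ≤ 2*N₂ := by
      intro n hn x hx
      obtain ⟨h1, h2, _⟩ := hmem n x hx
      exact ⟨by rw [← hFx]; exact h1, h2⟩
    have hlamne : lam ≠ 0 := ne_of_gt hlam0
    have hN₁ne : N₁ ≠ 0 := ne_of_gt hN₁0
    obtain ⟨q, hqdef⟩ : ∃ q' : ℝ, q' = |m| := ⟨_, rfl⟩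
    have hq0 : 0 ≤ q := by rw [hqdef]; exact abs_nonneg m
    rcases le_or_gt (4*N₂) q with hm | hm
    · -- Subcase B1 : q = |m| ≥ 4 N₂
      have hm0 : (0:ℝ) < q := by linarith
      have hqne : q ≠ 0 := ne_of_gt hm0
      have hcrange : ∀ n ∈ P, (q - 2*N₂)^2 - 1/2 ≤ c n ∧ c n ≤ (q + 2*N₂)^2 + 1/2 := by
        intro n hn
        obtain ⟨x, _, hx2, hx1⟩ := hfeas n hn
        have hl : q - 2*N₂ ≤ |x - m| := by
          have h := abs_sub_abs_le_abs_sub m x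
          rw [abs_sub_comm, ← hqdef] at h
          linarith
        have hr : |x - m| ≤ q + 2*N₂ := by
          have h := abs_sub x m
          rw [← hqdef] at h
          linarith
        have hsq1 : (q - 2*N₂)^2 ≤ (x-m)^2 := by
          nlinarith [sq_abs (x-m), abs_nonneg (x-m)]
        have hsq2 : (x-m)^2 ≤ (q+2*N₂)^2 := by
          nlinarith [sq_abs (x-m), abs_nonneg (x-m)]
        have habs := abs_le.mp hx1
        constructor <;> linarith [habs.1, habs.2]
      have hcard : (P.card : ℝ) ≤ (8*q*N₂+1) * (2*lam/N₁) + 1 := by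
        apply card_le_of_pairwise_bdd _ _ (by positivity)
        intro n hn n' hn'
        have hs := hsepP n hn n' hn'
        have hcn := hcrange n hn
        have hcn' := hcrange n' hn'
        have hd : |c n - c n'| ≤ 8*q*N₂ + 1 := by
          rw [abs_le]
          constructor <;> nlinarith [hcn.1, hcn.2, hcn'.1, hcn'.2]
        have h2 : N₁/(2*lam) * |(n:ℝ) - (n':ℝ)| ≤ 8*q*N₂+1 := le_trans hs hd
        have hpos : (0:ℝ) < N₁/(2*lam) := by positivity
        rw [show (8*q*N₂+1) * (2*lam/N₁) = (8*q*N₂+1) / (N₁/(2*lam)) by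
          field_simp; try ring, le_div_iff₀ hpos]
        linarith [h2, mul_comm (|(n:ℝ) - (n':ℝ)|) (N₁/(2*lam))]
      have hslice : ∀ n ∈ P, volume (S n) ≤ ENNReal.ofReal (2 * (1/q)) := by
        intro n hn
        apply vol_le_of_diam
        intro x hx z hz
        obtain ⟨h1x, h2x⟩ := hsliceGen n hn x hx
        obtain ⟨h1z, h2z⟩ := hsliceGen n hn z hz
        have hdiff : |(x-m)^2 - (z-m)^2| ≤ 1 := by
          rw [abs_le] at h1x h1z ⊢
          constructor <;> linarith [h1x.1, h1x.2, h1z.1, h1z.2]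
        rw [show (x-m)^2 - (z-m)^2 = (x - z)*(x + z - 2*m) by ring, abs_mul] at hdiff
        have hge : q ≤ |x + z - 2*m| := by
          have h := abs_sub_abs_le_abs_sub (2*m) (x+z)
          rw [show |2*m - (x+z)| = |x + z - 2*m| by rw [abs_sub_comm]] at h
          have h2m : |2*m| = 2*q := by rw [abs_mul, ← hqdef]; simp
          have hxz : |x+z| ≤ 4*N₂ := by
            have := abs_add_le x z
            linarith
          rw [h2m] at h
          linarith
        have hmul : |x - z| * q ≤ 1 := by
          calc |x - z| * q ≤ |x - z| * |x + z - 2*m| :=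
                mul_le_mul_of_nonneg_left hge (abs_nonneg _)
            _ ≤ 1 := hdiff
        rw [le_div_iff₀ hm0]
        linarith
      refine ⟨((8*q*N₂+1) * (2*lam/N₁) + 1) * (2*(1/q)), by positivity,
        sum_vol_le P _ _ _ (by positivity) (by positivity) hslice hcard, ?_⟩
      have key : 1/lam * (((8*q*N₂+1) * (2*lam/N₁) + 1) * (2*(1/q)))
          = (2/q)/lam + (32*N₂ + 4/q)/N₁ := by
        field_simp; try ring
      rw [key]
      apply numer lam N₁ N₂ _ _ hlam hN₂ hN₁0
      · rw [div_le_iff₀ hm0]; nlinarith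
      · have h4 : 4/q ≤ 1 := by rw [div_le_one hm0]; linarith
        nlinarith
    · -- Subcase B2 : q = |m| < 4 N₂
      have hchi : ∀ n ∈ P, -(1/2) ≤ c n ∧ c n ≤ 37*N₂^2 := by
        intro n hn
        obtain ⟨x, _, hx2, hx1⟩ := hfeas n hn
        have hr : |x - m| ≤ 6*N₂ := by
          have h := abs_sub x m
          rw [← hqdef] at h
          linarith
        have hsq2 : (x-m)^2 ≤ 36*N₂^2 := by
          nlinarith [sq_abs (x-m), abs_nonneg (x-m)]
        have habs := abs_le.mp hx1
        constructor
        · nlinarith [sq_nonneg (x-m), habs.2]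
        · nlinarith [habs.1]
      obtain ⟨Ps, hPsdef⟩ : ∃ F : Finset ℤ, F = P.filter (fun n => c n ≤ 1) := ⟨_, rfl⟩
      obtain ⟨Pb, hPbdef⟩ : ∃ F : Finset ℤ, F = P.filter (fun n => ¬ (c n ≤ 1)) := ⟨_, rfl⟩
      have hsplit : ∑ n ∈ P, volume (S n) = ∑ n ∈ Ps, volume (S n) + ∑ n ∈ Pb, volume (S n) := by
        rw [hPsdef, hPbdef]
        exact (Finset.sum_filter_add_sum_filter_not P _ _).symm
      have hsliceS : ∀ n ∈ Ps, volume (S n) ≤ ENNReal.ofReal (2 * 3) := by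
        intro n hn
        rw [hPsdef, Finset.mem_filter] at hn
        obtain ⟨hnP, hnc⟩ := hn
        apply vol_le_of_diam
        intro x hx z hz
        obtain ⟨h1x, _⟩ := hsliceGen n hnP x hx
        obtain ⟨h1z, _⟩ := hsliceGen n hnP z hz
        have hx3 : (x-m)^2 ≤ 3/2 := by
          have := abs_le.mp h1x
          linarith [this.2]
        have hz3 : (z-m)^2 ≤ 3/2 := by
          have := abs_le.mp h1z
          linarith [this.2]
        have hxm : |x - m| ≤ 13/10 := by nlinarith [sq_abs (x-m), abs_nonneg (x-m)]
        have hzm : |z - m| ≤ 13/10 := by nlinarith [sq_abs (z-m), abs_nonneg (z-m)]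
        calc |x - z| ≤ |x - m| + |m - z| := abs_sub_le x m z
          _ = |x - m| + |z - m| := by rw [abs_sub_comm m z]
          _ ≤ 3 := by linarith
      have hcardS : (Ps.card : ℝ) ≤ (3/2) * (2*lam/N₁) + 1 := by
        apply card_le_of_pairwise_bdd _ _ (by positivity)
        intro n hn n' hn'
        rw [hPsdef, Finset.mem_filter] at hn hn'
        have hs := hsepP n hn.1 n' hn'.1
        have hcn := hchi n hn.1
        have hcn' := hchi n' hn'.1
        have hd : |c n - c n'| ≤ 3/2 := by
          rw [abs_le]
          constructor <;> linarith [hcn.1, hn.2, hcn'.1, hn'.2]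
        have h2 : N₁/(2*lam) * |(n:ℝ) - (n':ℝ)| ≤ 3/2 := le_trans hs hd
        have hpos : (0:ℝ) < N₁/(2*lam) := by positivity
        rw [show (3/2 : ℝ) * (2*lam/N₁) = (3/2) / (N₁/(2*lam)) by field_simp; try ring,
          le_div_iff₀ hpos]
        linarith [h2, mul_comm (|(n:ℝ) - (n':ℝ)|) (N₁/(2*lam))]
      have hsumS : ∑ n ∈ Ps, volume (S n) ≤ ENNReal.ofReal (((3/2) * (2*lam/N₁) + 1) * (2*3)) :=
        sum_vol_le Ps _ _ _ (by norm_num) (by positivity) hsliceS hcardS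
      have hPb1 : ∀ n ∈ Pb, 1 ≤ c n ∧ c n ≤ 37*N₂^2 := by
        intro n hn
        rw [hPbdef, Finset.mem_filter] at hn
        exact ⟨le_of_lt (lt_of_not_ge hn.2), (hchi n hn.1).2⟩
      have hsepb : ∀ n ∈ Pb, ∀ n' ∈ Pb, n ≠ n' → N₁/(2*lam) ≤ |c n - c n'| := by
        intro n hn n' hn' hne
        rw [hPbdef, Finset.mem_filter] at hn hn'
        have hs := hsepP n hn.1 n' hn'.1
        have hge1 : (1:ℝ) ≤ |(n:ℝ) - (n':ℝ)| := by
          have h1 : (1:ℤ) ≤ |n - n'| := Int.one_le_abs (sub_ne_zero.mpr hne)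
          have h2 : ((|n - n'| : ℤ) : ℝ) = |(n:ℝ) - (n':ℝ)| := by push_cast; rfl
          rw [← h2]; exact_mod_cast h1
        calc N₁/(2*lam) = N₁/(2*lam) * 1 := by ring
          _ ≤ N₁/(2*lam) * |(n:ℝ) - (n':ℝ)| := by
              apply mul_le_mul_of_nonneg_left hge1 (by positivity)
          _ ≤ |c n - c n'| := hs
      have hsqsum : ∑ n ∈ Pb, 1/Real.sqrt (c n)
          ≤ 1 + 2/(N₁/(2*lam)) * Real.sqrt (37*N₂^2) :=
        sum_inv_sqrt_le (N₁/(2*lam)) (by positivity) Pb c (37*N₂^2) (by positivity) hPb1 hsepb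
      have hsliceB : ∀ n ∈ Pb, volume (S n) ≤ ENNReal.ofReal (2/Real.sqrt (c n)) := by
        intro n hn
        have hc1 : 1 ≤ c n := (hPb1 n hn).1
        rw [hPbdef, Finset.mem_filter] at hn
        obtain ⟨s₁, hs₁def⟩ : ∃ u : ℝ, u = Real.sqrt (c n - 1/2) := ⟨_, rfl⟩
        obtain ⟨s₂, hs₂def⟩ : ∃ u : ℝ, u = Real.sqrt (c n + 1/2) := ⟨_, rfl⟩
        have h0 : (0:ℝ) ≤ c n - 1/2 := by linarith
        have h0' : (0:ℝ) ≤ c n + 1/2 := by linarith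
        have e1 : s₁^2 = c n - 1/2 := by rw [hs₁def]; exact Real.sq_sqrt h0
        have e2 : s₂^2 = c n + 1/2 := by rw [hs₂def]; exact Real.sq_sqrt h0'
        have hs₁0 : 0 ≤ s₁ := by rw [hs₁def]; exact Real.sqrt_nonneg _
        have hs₂0 : 0 ≤ s₂ := by rw [hs₂def]; exact Real.sqrt_nonneg _
        have hs₁₂ : s₁ ≤ s₂ := by rw [hs₁def, hs₂def]; exact Real.sqrt_le_sqrt (by linarith)
        have hsub : S n ⊆ Set.Icc (m + s₁) (m + s₂) ∪ Set.Icc (m - s₂) (m - s₁) := by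
          intro x hx
          obtain ⟨h1, _⟩ := hsliceGen n hn.1 x hx
          have habs := abs_le.mp h1
          have hub : (x-m)^2 ≤ c n + 1/2 := by linarith [habs.2]
          have hlb : c n - 1/2 ≤ (x-m)^2 := by linarith [habs.1]
          have habs2 : |x - m| ≤ s₂ := by
            rw [hs₂def, show |x - m| = Real.sqrt ((x-m)^2) by rw [Real.sqrt_sq_eq_abs]]
            exact Real.sqrt_le_sqrt hub
          have habs1 : s₁ ≤ |x - m| := by
            rw [hs₁def, show |x - m| = Real.sqrt ((x-m)^2) by rw [Real.sqrt_sq_eq_abs]]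
            exact Real.sqrt_le_sqrt hlb
          rcases le_abs.mp habs1 with h | h
          · left
            refine ⟨by linarith, ?_⟩
            have := (abs_le.mp habs2).2
            linarith
          · right
            refine ⟨?_, by linarith⟩
            have := (abs_le.mp habs2).1
            linarith
        have hvol : volume (S n) ≤ ENNReal.ofReal (s₂ - s₁) + ENNReal.ofReal (s₂ - s₁) := by
          calc volume (S n) ≤ volume (Set.Icc (m + s₁) (m + s₂) ∪ Set.Icc (m - s₂) (m - s₁)) :=
                measure_mono hsub
            _ ≤ volume (Set.Icc (m + s₁) (m + s₂)) + volume (Set.Icc (m - s₂) (m - s₁)) :=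
                measure_union_le _ _
            _ = ENNReal.ofReal ((m + s₂) - (m + s₁)) + ENNReal.ofReal ((m - s₁) - (m - s₂)) := by
                rw [Real.volume_Icc, Real.volume_Icc]
            _ = ENNReal.ofReal (s₂ - s₁) + ENNReal.ofReal (s₂ - s₁) := by ring_nf
        have hcpos : (0:ℝ) < c n := by linarith
        have hsc : 0 < Real.sqrt (c n) := Real.sqrt_pos.mpr hcpos
        have hkey : 2*(s₂ - s₁) ≤ 2/Real.sqrt (c n) := by
          have hsc2 : Real.sqrt (c n) ≤ s₁ + s₂ := by
            rw [show s₁ + s₂ = Real.sqrt ((s₁+s₂)^2) by rw [Real.sqrt_sq (by linarith)]]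
            apply Real.sqrt_le_sqrt
            nlinarith [mul_nonneg hs₁0 hs₂0]
          have hprod : (s₂ - s₁)*(s₂ + s₁) = 1 := by nlinarith [e1, e2]
          rw [le_div_iff₀ hsc]
          nlinarith [mul_le_mul_of_nonneg_left hsc2 (by linarith : (0:ℝ) ≤ s₂ - s₁)]
        calc volume (S n) ≤ ENNReal.ofReal (s₂ - s₁) + ENNReal.ofReal (s₂ - s₁) := hvol
          _ = ENNReal.ofReal (2*(s₂ - s₁)) := by
              rw [← ENNReal.ofReal_add (by linarith) (by linarith)]; congr 1; ring
          _ ≤ ENNReal.ofReal (2/Real.sqrt (c n)) := ENNReal.ofReal_le_ofReal hkey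
      have hsumB : ∑ n ∈ Pb, volume (S n)
          ≤ ENNReal.ofReal (2*(1 + 2/(N₁/(2*lam)) * Real.sqrt (37*N₂^2))) := by
        calc ∑ n ∈ Pb, volume (S n) ≤ ∑ n ∈ Pb, ENNReal.ofReal (2/Real.sqrt (c n)) :=
              Finset.sum_le_sum hsliceB
          _ = ENNReal.ofReal (∑ n ∈ Pb, 2/Real.sqrt (c n)) :=
              (ENNReal.ofReal_sum_of_nonneg (fun n hn => by positivity)).symm
          _ ≤ ENNReal.ofReal (2*(1 + 2/(N₁/(2*lam)) * Real.sqrt (37*N₂^2))) := by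
              apply ENNReal.ofReal_le_ofReal
              have heq2 : ∑ n ∈ Pb, 2/Real.sqrt (c n) = 2 * ∑ n ∈ Pb, 1/Real.sqrt (c n) := by
                rw [Finset.mul_sum]
                exact Finset.sum_congr rfl (fun n _ => by ring)
              rw [heq2]
              linarith [hsqsum]
      refine ⟨((3/2) * (2*lam/N₁) + 1) * (2*3) + 2*(1 + 2/(N₁/(2*lam)) * Real.sqrt (37*N₂^2)),
        by positivity, ?_, ?_⟩
      · rw [hsplit, ENNReal.ofReal_add (by positivity) (by positivity)]
        exact add_le_add hsumS hsumB
      · have hsq7 : Real.sqrt (37*N₂^2) ≤ 7*N₂ := by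
          rw [show (7*N₂ : ℝ) = Real.sqrt ((7*N₂)^2) by rw [Real.sqrt_sq (by positivity)]]
          apply Real.sqrt_le_sqrt
          nlinarith
        have hsq0 : 0 ≤ Real.sqrt (37*N₂^2) := Real.sqrt_nonneg _
        have heq : 2/(N₁/(2*lam)) = 4*lam/N₁ := by field_simp; try ring
        rw [heq]
        have key : 1/lam * (((3/2) * (2*lam/N₁) + 1) * (2*3) + 2*(1 + 4*lam/N₁ * Real.sqrt (37*N₂^2)))
            = 8/lam + (18 + 8*Real.sqrt (37*N₂^2))/N₁ := by
          field_simp; try ring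
        rw [key]
        apply numer lam N₁ N₂ _ _ hlam hN₂ hN₁0
        · norm_num
        · nlinarith

set_option maxHeartbeats 1000000 in
/-- There is an absolute constant `C > 0` such that the following holds. Let `λ ≥ 1` be real,
let `N₁, N₂` be reals with `N₂ ≥ 1` and `N₁ ≥ 100 N₂`, and let `a, b ∈ ℝ × (1/λ)ℤ` satisfy
`N₁ ≤ |a| ≤ 2N₁` and `|b| ≤ 2N₂`. Then
`E_{a,b} = {η ∈ ℝ² : |H(η) + H(a+b−η) − H(a) − H(b)| ≤ 1 and |η| ≤ 2N₂}` satisfies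
`|E_{a,b}|_{ℝ×ℤ_{1/λ}} ≤ C (1/λ + N₂/N₁)`. -/
theorem stmt_16 :
    ∃ C : ℝ, 0 < C ∧ ∀ (lam : ℝ), 1 ≤ lam → ∀ (N₁ N₂ : ℝ), 1 ≤ N₂ → 100 * N₂ ≤ N₁ →
      ∀ (a₁ : ℝ) (a₂ : ℤ) (b₁ : ℝ) (b₂ : ℤ),
        let a : ℝ × ℝ := (a₁, (a₂ : ℝ) / lam)
        let b : ℝ × ℝ := (b₁, (b₂ : ℝ) / lam)
        N₁ ≤ Real.sqrt (a.1 ^ 2 + a.2 ^ 2) → Real.sqrt (a.1 ^ 2 + a.2 ^ 2) ≤ 2 * N₁ →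
        Real.sqrt (b.1 ^ 2 + b.2 ^ 2) ≤ 2 * N₂ →
        measureRZlam lam {η : ℝ × ℝ | |H η + H (a + b - η) - H a - H b| ≤ 1 ∧
            Real.sqrt (η.1 ^ 2 + η.2 ^ 2) ≤ 2 * N₂}
          ≤ ENNReal.ofReal (C * (1 / lam + N₂ / N₁)) := by
  
  refine ⟨1000, by norm_num, ?_⟩
  intro lam hlam N₁ N₂ hN₂ hN12 a₁ a₂ b₁ b₂ a b ha1 ha2 hb
  have hlam0 : 0 < lam := by linarith
  have hN₂0 : 0 < N₂ := by linarith
  have hN₁0 : 0 < N₁ := by linarith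
  have ha1' : N₁ ≤ Real.sqrt (a₁^2 + ((a₂:ℝ)/lam)^2) := ha1
  have hb' : Real.sqrt (b₁^2 + ((b₂:ℝ)/lam)^2) ≤ 2*N₂ := hb
  have haN : N₁^2 ≤ a₁^2 + ((a₂:ℝ)/lam)^2 := by
    have h0 : (0:ℝ) ≤ a₁^2 + ((a₂:ℝ)/lam)^2 := by positivity
    have h := Real.sq_sqrt h0
    nlinarith [ha1', Real.sqrt_nonneg (a₁^2 + ((a₂:ℝ)/lam)^2)]
  have hbsq : b₁^2 + ((b₂:ℝ)/lam)^2 ≤ 4*N₂^2 := by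
    have h0 : (0:ℝ) ≤ b₁^2 + ((b₂:ℝ)/lam)^2 := by positivity
    have h := Real.sq_sqrt h0
    nlinarith [hb', Real.sqrt_nonneg (b₁^2 + ((b₂:ℝ)/lam)^2)]
  have hb₁ : |b₁| ≤ 2*N₂ := abs_le.mpr ⟨by nlinarith [sq_nonneg ((b₂:ℝ)/lam)],
    by nlinarith [sq_nonneg ((b₂:ℝ)/lam)]⟩
  have hB2 : |(b₂:ℝ)/lam| ≤ 2*N₂ := abs_le.mpr ⟨by nlinarith [sq_nonneg b₁],
    by nlinarith [sq_nonneg b₁]⟩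
  unfold measureRZlam
  apply main_core lam N₁ N₂ a₁ ((a₂:ℝ)/lam) b₁ ((b₂:ℝ)/lam) hlam hN₂ hN12 haN hb₁ hB2
  intro n x hx
  obtain ⟨h1, h2⟩ := hx
  have hadef : a = (a₁, (a₂:ℝ)/lam) := rfl
  have hbdef : b = (b₁, (b₂:ℝ)/lam) := rfl
  have e : H (x, (n:ℝ)/lam) + H (a + b - (x, (n:ℝ)/lam)) - H a - H b
      = 2*((x - a₁)*(x - b₁) - ((n:ℝ)/lam - (a₂:ℝ)/lam)*((n:ℝ)/lam - (b₂:ℝ)/lam)) := by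
    simp only [hadef, hbdef, H, Prod.fst_add, Prod.snd_add, Prod.fst_sub, Prod.snd_sub]
    ring
  rw [e] at h1
  rw [abs_mul] at h1
  have habs2 : |(2:ℝ)| = 2 := by norm_num
  rw [habs2] at h1
  have h2' : Real.sqrt (x^2 + ((n:ℝ)/lam)^2) ≤ 2*N₂ := h2
  have hxy : x^2 + ((n:ℝ)/lam)^2 ≤ 4*N₂^2 := by
    have h0 : (0:ℝ) ≤ x^2 + ((n:ℝ)/lam)^2 := by positivity
    have h := Real.sq_sqrt h0
    nlinarith [h2', Real.sqrt_nonneg (x^2 + ((n:ℝ)/lam)^2)]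
  refine ⟨by linarith, ?_, ?_⟩
  · exact abs_le.mpr ⟨by nlinarith [sq_nonneg ((n:ℝ)/lam)], by nlinarith [sq_nonneg ((n:ℝ)/lam)]⟩
  · exact abs_le.mpr ⟨by nlinarith [sq_nonneg x], by nlinarith [sq_nonneg x]⟩
end
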